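/- arXiv:2310.08199 — 4 statements merged into one kernel-verified Lean document; each statement's English description precedes it below -/
import Mathlib

section
/- For a positive integer m and real b > 0, the Hadamard finite part of the divergent integral ∫_0^∞ e^{-bx}/x^m dx equals (-1)^m b^{m-1} (ln b − ψ(m)) / (m−1)!, where ψ is the digamma function. -/
open MeasureTheory Set Filter Topology

namespace FPaux

open Real


lemma integrableOn_exp_div_pow {b : ℝ} (hb : 0 < b) (n : ℕ) {ε : ℝ} (hε : 0 < ε) :
    IntegrableOn (fun x : ℝ => exp (-(b * x)) / x ^ n) (Ioi ε) := by
  apply integrable_of_isBigO_exp_neg hb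
  · apply ContinuousOn.div (by fun_prop) (by fun_prop)
    intro x hx
    exact pow_ne_zero _ (ne_of_gt (lt_of_lt_of_le hε hx))
  · apply Asymptotics.IsBigO.of_bound (max 1 (ε ^ n)⁻¹)
    filter_upwards [eventually_ge_atTop 1] with x hx
    have hx0 : (0:ℝ) < x := lt_of_lt_of_le one_pos hx
    rw [Real.norm_eq_abs, Real.norm_eq_abs, abs_of_nonneg (by positivity),
      abs_of_nonneg (exp_pos _).le, neg_mul]
    have h1 : exp (-(b*x)) / x ^ n ≤ exp (-(b*x)) / 1 ^ n := by
      apply div_le_div_of_nonneg_left (exp_pos _).le (by positivity)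
      exact pow_le_pow_left₀ (by norm_num) hx n
    calc exp (-(b*x)) / x ^ n ≤ exp (-(b*x)) := by simpa using h1
    _ ≤ max 1 (ε ^ n)⁻¹ * exp (-(b*x)) := by
        nth_rewrite 1 [← one_mul (exp (-(b*x)))]
        gcongr; exact le_max_left _ _

lemma integrableOn_log_mul_exp : IntegrableOn (fun t : ℝ => log t * exp (-t)) (Ioi 0) := by
  rw [← Ioc_union_Ioi_eq_Ioi (zero_le_one)]
  apply IntegrableOn.union
  · -- on Ioc 0 1, dominated by 2 * t ^ (-1/2 : ℝ)
    have hint : IntegrableOn (fun t : ℝ => 2 * t ^ (-(1/2) : ℝ)) (Ioc 0 1) := by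
      have := (intervalIntegral.intervalIntegrable_rpow' (a := 0) (b := 1) (r := -(1/2)) (by norm_num))
      rw [intervalIntegrable_iff_integrableOn_Ioc_of_le zero_le_one] at this
      exact this.const_mul 2
    apply hint.mono' ((Real.measurable_log.mul (by fun_prop)).aestronglyMeasurable)
    rw [ae_restrict_iff' measurableSet_Ioc]
    filter_upwards with t ht
    have ht0 : 0 < t := ht.1
    have h1 : |log t| ≤ 2 * t ^ (-(1/2) : ℝ) := by
      rw [abs_of_nonpos (log_nonpos ht0.le ht.2)]
      have h2 : log (t ^ (-(1/2) : ℝ)) ≤ t ^ (-(1/2) : ℝ) - 1 :=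
        Real.log_le_sub_one_of_pos (rpow_pos_of_pos ht0 _)
      rw [Real.log_rpow ht0] at h2
      nlinarith [rpow_pos_of_pos ht0 (-(1/2) : ℝ)]
    rw [Real.norm_eq_abs, Pi.mul_apply, abs_mul, abs_of_nonneg (exp_pos _).le]
    calc |log t| * exp (-t) ≤ |log t| * 1 := by
          gcongr; exact exp_le_one_iff.mpr (by linarith)
    _ ≤ 2 * t ^ (-(1/2) : ℝ) := by rwa [mul_one]
  · apply integrable_of_isBigO_exp_neg (b := 1/2) (by norm_num)
    · apply ContinuousOn.mul _ (by fun_prop)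
      exact Real.continuousOn_log.mono (fun x hx => ne_of_gt (lt_of_lt_of_le one_pos hx))
    · have h0 : Tendsto (fun x : ℝ => log x * exp (-(1/2 * x))) atTop (𝓝 0) := by
        apply squeeze_zero_norm' _ (tendsto_rpow_mul_exp_neg_mul_atTop_nhds_zero 1 (1/2) (by norm_num))
        filter_upwards [eventually_ge_atTop 1] with x hx
        have hx0 : (0:ℝ) < x := lt_of_lt_of_le one_pos hx
        rw [Real.norm_eq_abs, abs_mul, abs_of_nonneg (exp_pos _).le,
          abs_of_nonneg (log_nonneg hx), Real.rpow_one,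
          show -(1/2 * x) = -(1/2) * x by ring]
        gcongr
        linarith [Real.log_le_sub_one_of_pos hx0]
      have h1 := (h0.isBigO_one ℝ).mul
        (Asymptotics.isBigO_refl (fun x : ℝ => exp (-(1/2 * x))) atTop)
      apply h1.congr
      · intro x
        rw [mul_assoc, ← Real.exp_add, show -(1/2*x) + -(1/2*x) = -x by ring]
      · intro x
        rw [one_mul, show -(1/2*x) = -(1/2)*x by ring]

lemma integral_log_mul_exp :
    ∫ t in Ioi (0:ℝ), log t * exp (-t) = -eulerMascheroniConstant := by
  have h1 : HasDerivAt Complex.GammaIntegral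
      (∫ t : ℝ in Ioi 0, (t : ℂ) ^ ((1:ℂ) - 1) * (Real.log t * Real.exp (-t))) 1 :=
    Complex.hasDerivAt_GammaIntegral (by simp)
  have heq : (∫ t : ℝ in Ioi 0, (t : ℂ) ^ ((1:ℂ) - 1) * (Real.log t * Real.exp (-t)))
      = ((∫ t in Ioi (0:ℝ), log t * exp (-t) : ℝ) : ℂ) := by
    calc (∫ t : ℝ in Ioi 0, (t : ℂ) ^ ((1:ℂ) - 1) * (Real.log t * Real.exp (-t)))
        = ∫ t in Ioi (0:ℝ), ((log t * exp (-t) : ℝ) : ℂ) := by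
          apply setIntegral_congr_fun measurableSet_Ioi
          intro t ht
          simp [Complex.cpow_zero]
      _ = ((∫ t in Ioi (0:ℝ), log t * exp (-t) : ℝ) : ℂ) := integral_ofReal
  rw [heq] at h1
  have h2 : Complex.Gamma =ᶠ[𝓝 (1:ℂ)] Complex.GammaIntegral := by
    filter_upwards [(isOpen_lt continuous_const Complex.continuous_re).mem_nhds
      (by simp : (1:ℂ) ∈ {s : ℂ | 0 < s.re})] with s hs
    exact Complex.Gamma_eq_integral hs
  have h3 : HasDerivAt Complex.Gamma
      ((∫ t in Ioi (0:ℝ), log t * exp (-t) : ℝ) : ℂ) 1 := h1.congr_of_eventuallyEq h2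
  have h4 := h3.real_of_complex
  have h5 : HasDerivAt Real.Gamma (∫ t in Ioi (0:ℝ), log t * exp (-t)) 1 := by
    exact (by simpa using h4 : HasDerivAt (fun x : ℝ => (Complex.Gamma x).re) (∫ t in Ioi (0:ℝ), log t * exp (-t)) 1)
  have := h5.unique Real.hasDerivAt_Gamma_one
  linarith [this]


lemma tendsto_integral_Ioi :
    Tendsto (fun δ : ℝ => ∫ t in Ioi δ, log t * exp (-t)) (𝓝[>] (0:ℝ))
      (𝓝 (∫ t in Ioi (0:ℝ), log t * exp (-t))) := by
  set g : ℝ → ℝ := fun t => log t * exp (-t) with hg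
  have hmeas : AEStronglyMeasurable g (volume.restrict (Ioi (0:ℝ))) :=
    (Real.measurable_log.mul (by fun_prop)).aestronglyMeasurable
  have key : Tendsto (fun δ : ℝ => ∫ t in Ioi (0:ℝ), (Ioi δ).indicator g t) (𝓝[>] (0:ℝ))
      (𝓝 (∫ t in Ioi (0:ℝ), g t)) := by
    apply tendsto_integral_filter_of_dominated_convergence (fun t => ‖g t‖)
    · filter_upwards with δ
      exact hmeas.indicator measurableSet_Ioi
    · filter_upwards with δ
      filter_upwards with t
      exact norm_indicator_le_norm_self g t
    · exact integrableOn_log_mul_exp.norm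
    · filter_upwards [ae_restrict_mem measurableSet_Ioi] with t ht
      have hev : ∀ᶠ δ in 𝓝[>] (0:ℝ), (Ioi δ).indicator g t = g t := by
        filter_upwards [mem_nhdsWithin_of_mem_nhds (Iio_mem_nhds ht)] with δ hδ
        exact Set.indicator_of_mem (show t ∈ Ioi δ from hδ) g
      exact tendsto_const_nhds.congr' (hev.mono fun δ h => h.symm)
  apply key.congr'
  filter_upwards [self_mem_nhdsWithin] with δ (hδ : (0:ℝ) < δ)
  rw [setIntegral_indicator measurableSet_Ioi, Ioi_inter_Ioi, max_eq_right hδ.le]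

lemma ibp_base {δ : ℝ} (hδ : 0 < δ) :
    ∫ t in Ioi δ, exp (-t) / t = (∫ t in Ioi δ, log t * exp (-t)) - exp (-δ) * log δ := by
  have hint1 : IntegrableOn (fun t : ℝ => log t * exp (-t)) (Ioi δ) :=
    integrableOn_log_mul_exp.mono_set (Ioi_subset_Ioi hδ.le)
  have hint2 : IntegrableOn (fun t : ℝ => exp (-t) / t) (Ioi δ) := by
    have := integrableOn_exp_div_pow one_pos 1 hδ
    simpa using this
  have hderiv : ∀ t ∈ Ioi δ, HasDerivAt (fun t : ℝ => -(exp (-t) * log t))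
      (log t * exp (-t) - exp (-t) / t) t := by
    intro t ht
    have ht0 : 0 < t := hδ.trans ht
    have h1 : HasDerivAt (fun t : ℝ => exp (-t)) (-exp (-t)) t := by
      simpa using ((hasDerivAt_id t).neg.exp)
    have h2 := (h1.mul (Real.hasDerivAt_log ht0.ne')).neg
    exact h2.congr_deriv (by ring)
  have htends0 : Tendsto (fun t : ℝ => exp (-t) * log t) atTop (𝓝 0) := by
    apply squeeze_zero_norm' _ (tendsto_pow_mul_exp_neg_atTop_nhds_zero 1)
    filter_upwards [eventually_ge_atTop 1] with t ht
    rw [norm_mul, Real.norm_eq_abs, Real.norm_eq_abs, abs_of_nonneg (exp_pos _).le,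
      abs_of_nonneg (log_nonneg ht), pow_one, mul_comm]
    gcongr
    linarith [Real.log_le_sub_one_of_pos (lt_of_lt_of_le one_pos ht)]
  have htends : Tendsto (fun t : ℝ => -(exp (-t) * log t)) atTop (𝓝 (0:ℝ)) := by
    simpa using htends0.neg
  have hcont : ContinuousWithinAt (fun t : ℝ => -(exp (-t) * log t)) (Ici δ) δ :=
    (((Real.continuous_exp.comp continuous_neg).continuousAt.mul
      (Real.continuousAt_log hδ.ne')).neg).continuousWithinAt
  have hmain := integral_Ioi_of_hasDerivAt_of_tendsto hcont hderiv (hint1.sub hint2) htends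
  rw [integral_sub hint1 hint2] at hmain
  simp only [zero_sub, neg_neg] at hmain
  linarith


lemma tendsto_base :
    Tendsto (fun δ : ℝ => (∫ t in Ioi δ, exp (-t) / t) + log δ) (𝓝[>] (0:ℝ))
      (𝓝 (-eulerMascheroniConstant)) := by
  have h2 : Tendsto (fun δ : ℝ => (1 - exp (-δ)) * log δ) (𝓝[>] (0:ℝ)) (𝓝 0) := by
    have hmul : Tendsto (fun δ : ℝ => δ * log δ) (𝓝[>] (0:ℝ)) (𝓝 0) := by
      have := (Real.continuous_negMulLog.tendsto 0).neg
      simp only [Real.negMulLog, neg_zero, neg_neg] at this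
      simpa using this.mono_left nhdsWithin_le_nhds
    apply squeeze_zero_norm' _ (by simpa using hmul.norm)
    filter_upwards [self_mem_nhdsWithin] with δ (hδ : (0:ℝ) < δ)
    have hge : 0 ≤ 1 - exp (-δ) := by
      linarith [Real.exp_le_one_iff.mpr (by linarith : -δ ≤ 0)]
    rw [Real.norm_eq_abs]
    calc |(1 - exp (-δ)) * log δ| = (1 - exp (-δ)) * |log δ| := by
          rw [abs_mul, abs_of_nonneg hge]
      _ ≤ δ * |log δ| := by
          gcongr
          linarith [Real.add_one_le_exp (-δ)]
      _ = |δ| * |log δ| := by rw [abs_of_nonneg hδ.le]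
  have h1 := (tendsto_integral_Ioi.congr (fun δ => rfl)).add h2
  rw [integral_log_mul_exp, add_zero] at h1
  apply h1.congr'
  filter_upwards [self_mem_nhdsWithin] with δ (hδ : (0:ℝ) < δ)
  rw [ibp_base hδ]
  ring

lemma key_zero {b : ℝ} (hb : 0 < b) :
    Tendsto (fun ε : ℝ => (∫ x in Ioi ε, exp (-(b * x)) / x) + log ε) (𝓝[>] (0:ℝ))
      (𝓝 (-(log b + eulerMascheroniConstant))) := by
  have hsub : ∀ ε : ℝ, 0 < ε →
      (∫ x in Ioi ε, exp (-(b * x)) / x) = ∫ t in Ioi (b * ε), exp (-t) / t := by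
    intro ε hε
    have h0 := integral_comp_mul_left_Ioi (fun t : ℝ => exp (-t) / t) ε hb
    have h1 : ∫ x in Ioi ε, exp (-(b * x)) / x
        = ∫ x in Ioi ε, b * (exp (-(b * x)) / (b * x)) := by
      apply setIntegral_congr_fun measurableSet_Ioi
      intro x hx
      have hx0 : (0:ℝ) < x := hε.trans hx
      field_simp
    rw [h1, MeasureTheory.integral_const_mul, h0, smul_eq_mul, ← mul_assoc,
      mul_inv_cancel₀ hb.ne', one_mul]
  have hmap : Tendsto (fun ε : ℝ => b * ε) (𝓝[>] (0:ℝ)) (𝓝[>] (0:ℝ)) := by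
    rw [tendsto_nhdsWithin_iff]
    constructor
    · have : Tendsto (fun ε : ℝ => b * ε) (𝓝 (0:ℝ)) (𝓝 (b * 0)) :=
        (continuous_const.mul continuous_id).tendsto 0
      simpa using this.mono_left nhdsWithin_le_nhds
    · filter_upwards [self_mem_nhdsWithin] with ε (hε : (0:ℝ) < ε)
      exact mul_pos hb hε
  have hcomp := tendsto_base.comp hmap
  have := hcomp.sub_const (log b)
  rw [show -eulerMascheroniConstant - log b = -(log b + eulerMascheroniConstant) by ring] at this
  apply this.congr'
  filter_upwards [self_mem_nhdsWithin] with ε (hε : (0:ℝ) < ε)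
  simp only [Function.comp_apply]
  rw [hsub ε hε, Real.log_mul hb.ne' hε.ne']
  ring


lemma ibp_step {b : ℝ} (hb : 0 < b) (k : ℕ) {ε : ℝ} (hε : 0 < ε) :
    ∫ x in Ioi ε, exp (-(b * x)) / x ^ (k + 1 + 1)
      = exp (-(b * ε)) / (((k:ℝ) + 1) * ε ^ (k + 1))
        - (b / ((k:ℝ) + 1)) * ∫ x in Ioi ε, exp (-(b * x)) / x ^ (k + 1) := by
  set f : ℝ → ℝ := fun x => -(exp (-(b * x)) / (((k:ℝ) + 1) * x ^ (k + 1))) with hfdef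
  have hderiv : ∀ x ∈ Ioi ε, HasDerivAt f
      ((b / ((k:ℝ) + 1)) * (exp (-(b * x)) / x ^ (k + 1)) + exp (-(b * x)) / x ^ (k + 2)) x := by
    intro x hx
    have hx0 : (0:ℝ) < x := hε.trans hx
    have h1 : HasDerivAt (fun x : ℝ => exp (-(b * x))) (-b * exp (-(b * x))) x := by
      have := (((hasDerivAt_id x).const_mul b).neg).exp
      simpa [mul_comm] using this
    have h2 : HasDerivAt (fun x : ℝ => ((k:ℝ) + 1) * x ^ (k + 1))
        (((k:ℝ) + 1) * (((k + 1 : ℕ) : ℝ) * x ^ k)) x :=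
      (hasDerivAt_pow (k + 1) x).const_mul _
    have h3 := (h1.div h2 (by positivity)).neg
    have hxne : x ≠ 0 := hx0.ne'
    have hkne : ((k:ℝ) + 1) ≠ 0 := by positivity
    exact h3.congr_deriv (by push_cast; field_simp; ring)
  have htends : Tendsto f atTop (𝓝 0) := by
    have hg : Tendsto (fun x : ℝ => (((k:ℝ) + 1) * x ^ (k + 1))⁻¹) atTop (𝓝 0) := by
      apply Tendsto.inv_tendsto_atTop
      exact (tendsto_pow_atTop (Nat.succ_ne_zero k)).const_mul_atTop (by positivity)
    apply squeeze_zero_norm' _ hg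
    filter_upwards [eventually_ge_atTop 1] with x hx
    have hx0 : (0:ℝ) < x := lt_of_lt_of_le one_pos hx
    have hden : (0:ℝ) < ((k:ℝ) + 1) * x ^ (k + 1) := by positivity
    rw [hfdef, norm_neg, Real.norm_eq_abs, abs_of_nonneg (by positivity)]
    rw [div_le_iff₀ hden, inv_mul_cancel₀ hden.ne']
    exact Real.exp_le_one_iff.mpr (by nlinarith)
  have hcont : ContinuousWithinAt f (Ici ε) ε := by
    apply ContinuousAt.continuousWithinAt
    have hne : ((k:ℝ) + 1) * ε ^ (k + 1) ≠ 0 := by positivity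
    exact (((by fun_prop : Continuous fun x : ℝ => exp (-(b * x))).continuousAt).div
      ((by fun_prop : Continuous fun x : ℝ => ((k:ℝ) + 1) * x ^ (k + 1)).continuousAt) hne).neg
  have hint1 := integrableOn_exp_div_pow hb (k + 1) hε
  have hint2 := integrableOn_exp_div_pow hb (k + 2) hε
  have hmain := integral_Ioi_of_hasDerivAt_of_tendsto hcont hderiv
    ((hint1.const_mul _).add hint2) htends
  rw [integral_add (hint1.const_mul _) hint2, MeasureTheory.integral_const_mul] at hmain
  have hfε : f ε = -(exp (-(b * ε)) / (((k:ℝ) + 1) * ε ^ (k + 1))) := rfl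
  rw [hfε] at hmain
  linarith

lemma taylor_tendsto {b : ℝ} (hb : 0 < b) (k : ℕ) :
    Tendsto (fun ε : ℝ =>
        (exp (-(b * ε)) - ∑ j ∈ Finset.range (k + 1), (-b) ^ j / (j.factorial : ℝ) * ε ^ j)
          / (((k:ℝ) + 1) * ε ^ (k + 1)))
      (𝓝[>] (0:ℝ)) (𝓝 ((-b) ^ (k + 1) / (((k:ℝ) + 1) * ((k + 1).factorial : ℝ)))) := by
  set C : ℝ := (-b) ^ (k + 1) / (((k:ℝ) + 1) * ((k + 1).factorial : ℝ)) with hC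
  set c2 : ℝ := ((k + 3 : ℕ) : ℝ) / (((k + 2).factorial : ℝ) * ((k + 2 : ℕ) : ℝ)) with hc2
  have hR : Tendsto (fun ε : ℝ =>
      (exp (-(b * ε)) - ∑ j ∈ Finset.range (k + 2), (-(b * ε)) ^ j / (j.factorial : ℝ))
        / (((k:ℝ) + 1) * ε ^ (k + 1))) (𝓝[>] (0:ℝ)) (𝓝 0) := by
    have hg : Tendsto (fun ε : ℝ => b ^ (k + 2) * c2 / ((k:ℝ) + 1) * ε) (𝓝[>] (0:ℝ)) (𝓝 0) := by
      have := (continuous_const.mul continuous_id).tendsto (0:ℝ)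
        (f := fun ε : ℝ => b ^ (k + 2) * c2 / ((k:ℝ) + 1) * ε)
      simp only [mul_zero] at this
      exact this.mono_left nhdsWithin_le_nhds
    apply squeeze_zero_norm' _ hg
    filter_upwards [self_mem_nhdsWithin,
      mem_nhdsWithin_of_mem_nhds (Iio_mem_nhds (show (0:ℝ) < 1 / b by positivity))]
      with ε (hε : (0:ℝ) < ε) (hεb : ε < 1 / b)
    have hden : (0:ℝ) < ((k:ℝ) + 1) * ε ^ (k + 1) := by positivity
    have habs : |(-(b * ε))| ≤ 1 := by
      rw [abs_neg, abs_of_pos (mul_pos hb hε)]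
      rw [lt_div_iff₀ hb] at hεb
      linarith
    have hexp := Real.exp_bound habs (n := k + 2) (by positivity)
    rw [Real.norm_eq_abs, abs_div, abs_of_pos hden]
    calc |exp (-(b * ε)) - ∑ j ∈ Finset.range (k + 2), (-(b * ε)) ^ j / (j.factorial : ℝ)|
          / (((k:ℝ) + 1) * ε ^ (k + 1))
        ≤ (|(-(b * ε))| ^ (k + 2) * c2) / (((k:ℝ) + 1) * ε ^ (k + 1)) := by
          gcongr
      _ = b ^ (k + 2) * c2 / ((k:ℝ) + 1) * ε := by
          rw [abs_neg, abs_of_pos (mul_pos hb hε), mul_pow]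
          field_simp
          ring
  have heq : ∀ᶠ ε in 𝓝[>] (0:ℝ),
      (exp (-(b * ε)) - ∑ j ∈ Finset.range (k + 2), (-(b * ε)) ^ j / (j.factorial : ℝ))
        / (((k:ℝ) + 1) * ε ^ (k + 1)) + C
      = (exp (-(b * ε)) - ∑ j ∈ Finset.range (k + 1), (-b) ^ j / (j.factorial : ℝ) * ε ^ j)
        / (((k:ℝ) + 1) * ε ^ (k + 1)) := by
    filter_upwards [self_mem_nhdsWithin] with ε (hε : (0:ℝ) < ε)
    have hden : (((k:ℝ) + 1) * ε ^ (k + 1)) ≠ 0 := by positivity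
    have hsum : (∑ j ∈ Finset.range (k + 2), (-(b * ε)) ^ j / (j.factorial : ℝ))
        = (∑ j ∈ Finset.range (k + 1), (-b) ^ j / (j.factorial : ℝ) * ε ^ j)
          + (-(b * ε)) ^ (k + 1) / ((k + 1).factorial : ℝ) := by
      rw [Finset.sum_range_succ]
      congr 1
      apply Finset.sum_congr rfl
      intro j _
      rw [show -(b * ε) = (-b) * ε by ring, mul_pow]
      ring
    rw [hsum, hC]
    have hfac : (((k + 1).factorial : ℝ)) ≠ 0 := by positivity
    rw [show -(b * ε) = (-b) * ε by ring, mul_pow]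
    field_simp
    ring
  have := hR.add (tendsto_const_nhds (x := C))
  rw [zero_add] at this
  exact this.congr' heq


lemma hlog_coeff {b : ℝ} (k : ℕ) :
    (-b) ^ (k + 1) / (((k + 1).factorial : ℝ)) = -(b / ((k:ℝ) + 1)) * ((-b) ^ k / (k.factorial : ℝ)) := by
  have h1 : ((k.factorial : ℝ)) ≠ 0 := by positivity
  rw [pow_succ, Nat.factorial_succ]
  push_cast
  field_simp

lemma sum_identity {b : ℝ} (k : ℕ) {ε : ℝ} (hε : 0 < ε) :
    (∑ j ∈ Finset.range (k + 1),
        (-b) ^ j / (j.factorial : ℝ) * ε ^ ((j : ℤ) - ((k:ℤ) + 1)) / (((k:ℝ) + 1) - (j : ℝ)))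
      + (b / ((k:ℝ) + 1)) * ∑ j ∈ Finset.range k,
        (-b) ^ j / (j.factorial : ℝ) * ε ^ ((j : ℤ) - (k:ℤ)) / ((k:ℝ) - (j : ℝ))
    = (∑ j ∈ Finset.range (k + 1), (-b) ^ j / (j.factorial : ℝ) * ε ^ j)
        / (((k:ℝ) + 1) * ε ^ (k + 1)) := by
  have hεne : ε ≠ 0 := hε.ne'
  rw [Finset.sum_div, Finset.sum_range_succ' _ k, Finset.sum_range_succ'
    (fun j => (-b) ^ j / (j.factorial : ℝ) * ε ^ j / (((k:ℝ) + 1) * ε ^ (k + 1))) k,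
    Finset.mul_sum, add_right_comm, ← Finset.sum_add_distrib]
  congr 1
  · apply Finset.sum_congr rfl
    intro j hj
    have hj' : (j : ℝ) < k := by exact_mod_cast Finset.mem_range.mp hj
    have hkj : (k:ℝ) - j ≠ 0 := by linarith
    have hk1 : ((k:ℝ) + 1) ≠ 0 := by positivity
    have hfj : ((j.factorial : ℝ)) ≠ 0 := by positivity
    have hεk : (ε : ℝ) ^ (k + 1) ≠ 0 := by positivity
    have hexp1 : ((j + 1 : ℕ) : ℤ) - ((k:ℤ) + 1) = (j : ℤ) - (k : ℤ) := by push_cast; ring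
    have hpow : ε ^ (j + 1) = ε ^ ((j : ℤ) - (k : ℤ)) * ε ^ (k + 1) := by
      rw [← zpow_natCast ε (j + 1), ← zpow_natCast ε (k + 1), ← zpow_add₀ hεne]
      congr 1
      push_cast
      ring
    rw [hexp1, hpow]
    have hkj1 : ((k:ℝ) + 1) - ((j:ℕ) + 1 : ℕ) = (k:ℝ) - j := by push_cast; ring
    push_cast [Nat.factorial_succ, pow_succ]
    rw [show (k:ℝ) + 1 - ((j:ℝ) + 1) = (k:ℝ) - j by ring]
    field_simp
    ring
  · have h0 : ((0:ℕ) : ℤ) - ((k:ℤ) + 1) = -((k:ℤ) + 1) := by push_cast; ring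
    rw [h0]
    have hcast : ((k + 1 : ℕ) : ℤ) = (k:ℤ) + 1 := by push_cast; ring
    have hzp : ε ^ (-((k:ℤ) + 1)) = (ε ^ (k + 1))⁻¹ := by
      rw [zpow_neg, ← hcast, zpow_natCast]
    rw [hzp]
    norm_num
    ring

lemma key {b : ℝ} (hb : 0 < b) (k : ℕ) :
    Tendsto (fun ε : ℝ =>
      (∫ x in Ioi ε, exp (-(b * x)) / x ^ (k + 1))
        - (∑ j ∈ Finset.range k,
            (-b) ^ j / (j.factorial : ℝ) * ε ^ ((j : ℤ) - (k : ℤ)) / ((k:ℝ) - (j:ℝ)))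
        + ((-b) ^ k / (k.factorial : ℝ)) * log ε)
      (𝓝[>] (0:ℝ))
      (𝓝 ((-1 : ℝ) ^ (k + 1) * b ^ k / (k.factorial : ℝ) *
        (log b - (-eulerMascheroniConstant + ∑ j ∈ Finset.range k, 1 / ((j : ℝ) + 1))))) := by
  induction k with
  | zero =>
    have h := key_zero hb
    have hv : -(log b + eulerMascheroniConstant)
        = (-1 : ℝ) ^ (0 + 1) * b ^ 0 / ((0:ℕ).factorial : ℝ) *
          (log b - (-eulerMascheroniConstant + ∑ j ∈ Finset.range 0, 1 / ((j : ℝ) + 1))) := by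
      norm_num
    rw [hv] at h
    apply h.congr
    intro ε
    norm_num [pow_one]
  | succ k ih =>
    have hval : -(b / ((k:ℝ) + 1)) * ((-1 : ℝ) ^ (k + 1) * b ^ k / (k.factorial : ℝ) *
          (log b - (-eulerMascheroniConstant + ∑ j ∈ Finset.range k, 1 / ((j : ℝ) + 1))))
        + (-b) ^ (k + 1) / (((k:ℝ) + 1) * ((k + 1).factorial : ℝ))
        = (-1 : ℝ) ^ (k + 1 + 1) * b ^ (k + 1) / ((k + 1).factorial : ℝ) *
          (log b - (-eulerMascheroniConstant + ∑ j ∈ Finset.range (k + 1), 1 / ((j : ℝ) + 1))) := by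
      rw [Finset.sum_range_succ]
      have h1 : ((k.factorial : ℝ)) ≠ 0 := by positivity
      have h2 : ((k:ℝ) + 1) ≠ 0 := by positivity
      push_cast [Nat.factorial_succ, pow_succ]
      field_simp
      ring
    have hT := taylor_tendsto hb k
    have hcomb := (ih.const_mul (-(b / ((k:ℝ) + 1)))).add hT
    rw [hval] at hcomb
    apply hcomb.congr'
    filter_upwards [self_mem_nhdsWithin] with ε (hε : (0:ℝ) < ε)
    rw [ibp_step hb k hε]
    have hsum := sum_identity (b := b) k hε
    have hlog := hlog_coeff (b := b) k
    have hfacR : (((k + 1).factorial : ℕ) : ℝ) = ((k:ℝ) + 1) * (k.factorial : ℝ) := by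
      rw [Nat.factorial_succ]; push_cast; ring
    push_cast
    rw [hfacR] at hlog ⊢
    have hinv : (((k:ℝ) + 1) * (k.factorial : ℝ))⁻¹ = ((k:ℝ) + 1)⁻¹ * ((k.factorial : ℝ))⁻¹ :=
      mul_inv _ _
    linear_combination hsum + Real.log ε * hlog + (2 * b * b ^ k * Real.log ε * (-1 : ℝ) ^ k) * hinv

end FPaux

/-- For a positive integer `m` and real `b > 0`, the Hadamard finite part of the divergent
integral `∫_0^∞ e^{-bx}/x^m dx`, defined canonically as the limit as `ε → 0⁺` of the cutoff
integral `∫_ε^∞ e^{-bx}/x^m dx` minus its diverging part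
`D_ε = ∑_{j=0}^{m-2} ((-b)^j/j!) ε^{j+1-m}/(m-1-j) - ((-b)^{m-1}/(m-1)!) log ε`,
equals `(-1)^m b^{m-1} (ln b − ψ(m))/(m−1)!`, where `ψ(m) = -γ + ∑_{j=1}^{m-1} 1/j`
is the digamma function at the positive integer `m`. -/

theorem finitePart_exp_neg (m : ℕ) (hm : 1 ≤ m) (b : ℝ) (hb : 0 < b) :
    Filter.Tendsto (fun ε : ℝ =>
      (∫ x in Set.Ioi ε, Real.exp (-(b * x)) / x ^ m)
        - (∑ j ∈ Finset.range (m - 1),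
            ((-b) ^ j / (j.factorial : ℝ)) * ε ^ ((j : ℤ) + 1 - (m : ℤ)) / ((m : ℝ) - 1 - (j : ℝ)))
        + ((-b) ^ (m - 1) / ((m - 1).factorial : ℝ)) * Real.log ε)
      (nhdsWithin 0 (Set.Ioi 0))
      (nhds ((-1 : ℝ) ^ m * b ^ (m - 1) / ((m - 1).factorial : ℝ) *
        (Real.log b -
          (-Real.eulerMascheroniConstant + ∑ j ∈ Finset.range (m - 1), 1 / ((j : ℝ) + 1))))) := by
  obtain ⟨k, rfl⟩ : ∃ k, m = k + 1 := ⟨m - 1, (Nat.succ_pred_eq_of_pos hm).symm⟩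
  simp only [Nat.add_sub_cancel]
  have e1 : ∀ j : ℕ, ((j : ℤ) + 1 - ((k + 1 : ℕ) : ℤ)) = (j : ℤ) - (k : ℤ) := by
    intro j; push_cast; ring
  have e2 : (((k + 1 : ℕ)) : ℝ) - 1 = (k : ℝ) := by push_cast; ring
  simp only [e1, e2]
  exact FPaux.key hb k
end

section
/- For β > 0, the finite part of ∫_0^∞ e^{-τ} csch(√β τ)/τ² dτ equals 2√β [ (ln β + ln 4 + 2γ − 2) ζ(−1, (1+√β)/(2√β)) − 2 ζ^{(1,0)}(−1, (1+√β)/(2√β)) ], where ζ^{(1,0)} denotes the derivative of the Hurwitz zeta function with respect to its first argument and γ is Euler's constant. -/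
open Filter Topology Complex

/-- For `β > 0`, the Hadamard finite part of `∫_0^∞ e^{-τ} csch(√β τ)/τ² dτ`, defined as
the regularized limit at `s = −1` (the constant Laurent coefficient at the simple pole,
characterized by subtracting the residue term `c/(s+1)`) of the analytic continuation
`2^{1−s} β^{-s/2} Γ(s) ζ(s, (1+√β)/(2√β))` of the Mellin transform, equals
`2√β [ (ln β + ln 4 + 2γ − 2) ζ(−1, ν₀) − 2 ζ^{(1,0)}(−1, ν₀) ]` with
`ν₀ = (1+√β)/(2√β)`.  The Hurwitz zeta function `ζ(s,ν)` and its `s`-derivative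
`ζ^{(1,0)}` are formalized through any analytic continuation `Z`. -/
theorem finitePart_exp_csch (β : ℝ) (hβ : 0 < β) (Z : ℂ → ℂ → ℂ)
    (hZdiff : ∀ ν : ℂ, 0 < ν.re →
      DifferentiableOn ℂ (fun s => Z s ν) {s : ℂ | s ≠ 1})
    (hZser : ∀ ν : ℂ, 0 < ν.re → ∀ s : ℂ, 1 < s.re →
      Z s ν = ∑' n : ℕ, ((n : ℂ) + ν) ^ (-s)) :
    ∃ c : ℂ, Filter.Tendsto (fun s : ℂ =>
        (2 : ℂ) ^ (1 - s) * ((β : ℂ)) ^ (-s/2) * Complex.Gamma s *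
          Z s (((1 + Real.sqrt β) / (2 * Real.sqrt β) : ℝ) : ℂ) - c / (s + 1))
      (nhdsWithin (-1) {(-1 : ℂ)}ᶜ)
      (nhds (2 * (Real.sqrt β : ℂ) *
        (((Real.log β + Real.log 4 + 2 * Real.eulerMascheroniConstant - 2 : ℝ) : ℂ) *
            Z (-1) (((1 + Real.sqrt β) / (2 * Real.sqrt β) : ℝ) : ℂ) -
          2 * deriv (fun s => Z s (((1 + Real.sqrt β) / (2 * Real.sqrt β) : ℝ) : ℂ)) (-1)))) := by
  set ν₀ : ℂ := (((1 + Real.sqrt β) / (2 * Real.sqrt β) : ℝ) : ℂ) with hν₀def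
  have hsβ : 0 < Real.sqrt β := Real.sqrt_pos.mpr hβ
  have hνpos : 0 < ν₀.re := by
    rw [hν₀def, Complex.ofReal_re]; positivity
  have hZd : DifferentiableAt ℂ (fun s => Z s ν₀) (-1) :=
    (hZdiff ν₀ hνpos).differentiableAt (isOpen_ne.mem_nhds (by norm_num))
  have hZ : HasDerivAt (fun s => Z s ν₀) (deriv (fun s => Z s ν₀) (-1)) (-1) := hZd.hasDerivAt
  -- derivative pieces
  have hA : HasDerivAt (fun s : ℂ => (2:ℂ) ^ (1 - s))
      ((2:ℂ) ^ (1 - (-1:ℂ)) * Complex.log 2 * (-1)) (-1) :=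
    ((hasDerivAt_id (-1:ℂ)).const_sub 1).const_cpow (Or.inl two_ne_zero)
  have hB : HasDerivAt (fun s : ℂ => ((β:ℂ)) ^ (-s/2))
      (((β:ℂ)) ^ (-(-1:ℂ)/2) * Complex.log (β:ℂ) * (-1/2)) (-1) := by
    have h1 : HasDerivAt (fun s : ℂ => -s/2) (-1/2) (-1) :=
      (hasDerivAt_id (-1:ℂ)).neg.div_const 2
    exact h1.const_cpow (Or.inl (by exact_mod_cast hβ.ne'))
  have hΓ : HasDerivAt (fun s : ℂ => Complex.Gamma (s + 2))
      (-(Real.eulerMascheroniConstant : ℂ)) (-1) := by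
    have h1 : HasDerivAt (fun s : ℂ => s + 2) 1 (-1) := (hasDerivAt_id _).add_const 2
    have hg : HasDerivAt Complex.Gamma (-(Real.eulerMascheroniConstant : ℂ)) ((-1:ℂ) + 2) := by
      rw [show ((-1:ℂ) + 2) = 1 by norm_num]; exact Complex.hasDerivAt_Gamma_one
    have := hg.comp (-1:ℂ) h1; rw [mul_one] at this; exact this
  have hH : HasDerivAt (fun s : ℂ => Complex.Gamma (s + 2) / s)
      ((-(Real.eulerMascheroniConstant : ℂ) * (-1) - Complex.Gamma ((-1:ℂ) + 2) * 1) / (-1:ℂ) ^ 2)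
      (-1) := hΓ.div (hasDerivAt_id (-1:ℂ)) (by norm_num)
  have hG := (hA.mul hB).mul hZ
  have hf := hH.mul hG
  -- value lemmas
  have e1 : (2:ℂ) ^ (1 - (-1:ℂ)) = 4 := by
    rw [show (1 - (-1:ℂ)) = ((2:ℕ):ℂ) by norm_num, Complex.cpow_natCast]; norm_num
  have e2 : ((β:ℂ)) ^ (-(-1:ℂ)/2) = (Real.sqrt β : ℂ) := by
    rw [show (-(-1:ℂ)/2) = (((1/2 : ℝ)):ℂ) by norm_num, ← Complex.ofReal_cpow hβ.le,
      ← Real.sqrt_eq_rpow]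
  have e3 : Complex.Gamma ((-1:ℂ) + 2) = 1 := by
    rw [show ((-1:ℂ) + 2) = 1 by norm_num, Complex.Gamma_one]
  have e4 : Complex.log (β:ℂ) = ((Real.log β : ℝ) : ℂ) := (Complex.ofReal_log hβ.le).symm
  have e5 : Complex.log 2 = ((Real.log 2 : ℝ) : ℂ) := by
    rw [show (2:ℂ) = ((2:ℝ):ℂ) by norm_num, ← Complex.ofReal_log (by norm_num : (0:ℝ) ≤ 2)]
  have e6 : Real.log 4 = 2 * Real.log 2 := by
    rw [show (4:ℝ) = 2 ^ 2 by norm_num, Real.log_pow]; norm_num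
  set L := 2 * (Real.sqrt β : ℂ) *
        (((Real.log β + Real.log 4 + 2 * Real.eulerMascheroniConstant - 2 : ℝ) : ℂ) *
            Z (-1) ν₀ - 2 * deriv (fun s => Z s ν₀) (-1)) with hLdef
  have hD : HasDerivAt (fun s : ℂ =>
      Complex.Gamma (s + 2) / s * ((2:ℂ) ^ (1 - s) * ((β:ℂ)) ^ (-s/2) * Z s ν₀)) L (-1) := by
    refine hf.congr_deriv ?_
    simp only [hLdef, Pi.mul_apply, e1, e2, e3, e4, e5, e6]
    push_cast
    ring
  refine ⟨Complex.Gamma ((-1:ℂ) + 2) / (-1) *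
      ((2:ℂ) ^ (1 - (-1:ℂ)) * ((β:ℂ)) ^ (-(-1:ℂ)/2) * Z (-1) ν₀), ?_⟩
  have key := hasDerivAt_iff_tendsto_slope.mp hD
  refine key.congr' ?_
  have h0 : ∀ᶠ s in 𝓝[≠] (-1:ℂ), s ≠ 0 :=
    eventually_nhdsWithin_of_eventually_nhds (eventually_ne_nhds (by norm_num))
  filter_upwards [h0, self_mem_nhdsWithin] with s hs0 hs1
  have hs1' : s ≠ -1 := hs1
  have hsp1 : s + 1 ≠ 0 := by
    intro h; exact hs1' (by linear_combination h)
  have hg2 : Complex.Gamma (s + 2) = (s + 1) * (s * Complex.Gamma s) := by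
    rw [show s + 2 = (s + 1) + 1 by ring, Complex.Gamma_add_one _ hsp1,
      Complex.Gamma_add_one _ hs0]
  have hfs : Complex.Gamma (s + 2) / s * ((2:ℂ) ^ (1 - s) * ((β:ℂ)) ^ (-s/2) * Z s ν₀)
      = (s + 1) * ((2:ℂ) ^ (1 - s) * ((β:ℂ)) ^ (-s/2) * Complex.Gamma s * Z s ν₀) := by
    rw [hg2]; field_simp
  rw [slope_def_field, show s - (-1) = s + 1 by ring, hfs]
  rw [sub_div, mul_div_cancel_left₀ _ hsp1]
end

section
/- For β > 0, the convergent integral f₀(β) = ∫_0^∞ τ^{-3} e^{-τ} ( √β τ csch(√β τ) − 1 + βτ²/6 ) dτ equals the sum of three Hadamard finite part integrals: √β · FP∫_0^∞ e^{-τ} csch(√β τ)/τ² dτ − FP∫_0^∞ e^{-τ}/τ³ dτ + (β/6) · FP∫_0^∞ e^{-τ}/τ dτ. -/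
open MeasureTheory Set Filter Topology


lemma sinh_approx {x : ℝ} (hx : |x| ≤ 1) :
    |Real.sinh x - (x + x ^ 3 / 6)| ≤ |x| ^ 5 / 100 := by
  have h1 := Real.exp_bound hx (n := 5) (by norm_num)
  have h2 := Real.exp_bound (x := -x) (by rwa [abs_neg]) (n := 5) (by norm_num)
  rw [abs_neg] at h2
  have e1 : ∑ m ∈ Finset.range 5, x ^ m / m.factorial
      = 1 + x + x^2/2 + x^3/6 + x^4/24 := by
    norm_num [Finset.sum_range_succ, Nat.factorial]
    try ring
  have e2 : ∑ m ∈ Finset.range 5, (-x) ^ m / m.factorial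
      = 1 - x + x^2/2 - x^3/6 + x^4/24 := by
    norm_num [Finset.sum_range_succ, Nat.factorial]
    try ring
  rw [e1] at h1; rw [e2] at h2
  rw [Real.sinh_eq]
  have h5 : ((Nat.succ 5 : ℝ) / ((Nat.factorial 5 : ℝ) * (5:ℕ))) = 1/100 := by
    norm_num [Nat.factorial]
  rw [h5] at h1 h2
  rw [show |x|^5 * (1/100) = |x|^5/100 by ring] at h1 h2
  have key : (Real.exp x - Real.exp (-x))/2 - (x + x^3/6)
      = ((Real.exp x - (1 + x + x^2/2 + x^3/6 + x^4/24))
        - (Real.exp (-x) - (1 - x + x^2/2 - x^3/6 + x^4/24)))/2 := by ring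
  rw [key, abs_div, abs_two]
  calc |Real.exp x - (1 + x + x^2/2 + x^3/6 + x^4/24)
        - (Real.exp (-x) - (1 - x + x^2/2 - x^3/6 + x^4/24))| / 2
      ≤ (|Real.exp x - (1 + x + x^2/2 + x^3/6 + x^4/24)|
          + |Real.exp (-x) - (1 - x + x^2/2 - x^3/6 + x^4/24)|) / 2 := by
        gcongr; exact abs_sub _ _
    _ ≤ (|x|^5/100 + |x|^5/100) / 2 := by gcongr
    _ = |x|^5/100 := by ring

lemma phi_bound {x : ℝ} (hx0 : 0 < x) (hx1 : x ≤ 1) :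
    |x / Real.sinh x - 1 + x ^ 2 / 6| ≤ x ^ 4 := by
  have hs : 0 < Real.sinh x := Real.sinh_pos_iff.mpr hx0
  have hxs : x ≤ Real.sinh x := Real.self_le_sinh_iff.mpr hx0.le
  have hax : |x| = x := abs_of_pos hx0
  have hr := sinh_approx (x := x) (by rw [hax]; exact hx1)
  rw [hax] at hr
  set r : ℝ := Real.sinh x - (x + x^3/6) with hrdef
  have hsinh : Real.sinh x = x + x^3/6 + r := by rw [hrdef]; ring
  have key : x / Real.sinh x - 1 + x ^ 2 / 6
      = (x - Real.sinh x + x^2 * Real.sinh x / 6) / Real.sinh x := by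
    rw [eq_div_iff hs.ne']; field_simp
  rw [key, abs_div, abs_of_pos hs]
  have hnum : x - Real.sinh x + x^2 * Real.sinh x / 6
      = -r + x^5/36 + x^2 * r / 6 := by rw [hsinh]; ring
  rw [hnum]
  have hnb : |-r + x^5/36 + x^2 * r / 6| ≤ x^5 := by
    have h1 : |(-r : ℝ)| ≤ x^5/100 := by rwa [abs_neg]
    have h2 : |x^2 * r / 6| ≤ x^5/100 := by
      rw [abs_div, abs_mul]
      have : |x^2| ≤ 1 := by rw [abs_of_pos (by positivity)]; nlinarith
      calc |x^2| * |r| / |(6:ℝ)| ≤ 1 * (x^5/100) / 6 := by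
            rw [abs_of_pos (by norm_num : (0:ℝ) < 6)]; gcongr
        _ ≤ x^5/100 := by nlinarith [pow_pos hx0 5]
    calc |-r + x^5/36 + x^2 * r / 6| ≤ |(-r : ℝ)| + |x^5/36| + |x^2 * r / 6| :=
          (abs_add_le _ _).trans (by gcongr; exact abs_add_le _ _)
      _ ≤ x^5/100 + x^5/36 + x^5/100 := by
          refine add_le_add (add_le_add h1 (le_of_eq ?_)) h2
          exact abs_of_nonneg (by positivity)
      _ ≤ x^5 := by nlinarith [pow_pos hx0 5]
  calc |-r + x^5/36 + x^2 * r / 6| / Real.sinh x ≤ x^5 / x := by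
        exact div_le_div₀ (by positivity) hnb hx0 hxs
    _ = x^4 := by
        rw [div_eq_iff hx0.ne']; ring


lemma fp_aux {p q r L : ℝ}
    (h : Tendsto (fun ε : ℝ => p / ε ^ 2 + q / ε + r * Real.log ε)
      (𝓝[>] (0:ℝ)) (𝓝 L)) : L = 0 := by
  have hsq : Tendsto (fun ε : ℝ => ε ^ 2) (𝓝[>] (0:ℝ)) (𝓝 0) := by
    have : Tendsto (fun ε : ℝ => ε ^ 2) (𝓝 (0:ℝ)) (𝓝 0) := by
      simpa using (continuous_pow 2).tendsto (0:ℝ)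
    exact this.mono_left nhdsWithin_le_nhds
  have hid : Tendsto (fun ε : ℝ => ε) (𝓝[>] (0:ℝ)) (𝓝 0) :=
    tendsto_id.mono_left nhdsWithin_le_nhds
  have hlog2 : Tendsto (fun ε : ℝ => Real.log ε * ε ^ 2) (𝓝[>] (0:ℝ)) (𝓝 0) := by
    have := tendsto_log_mul_rpow_nhdsGT_zero (by norm_num : (0:ℝ) < 2)
    refine this.congr' ?_
    filter_upwards [self_mem_nhdsWithin] with x hx
    rw [Real.rpow_two]
  have hlog1 : Tendsto (fun ε : ℝ => Real.log ε * ε) (𝓝[>] (0:ℝ)) (𝓝 0) := by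
    have := tendsto_log_mul_rpow_nhdsGT_zero (by norm_num : (0:ℝ) < 1)
    refine this.congr' ?_
    filter_upwards [self_mem_nhdsWithin] with x hx
    rw [Real.rpow_one]
  -- step 1 : p = 0
  have hp : p = 0 := by
    have h1 : Tendsto (fun ε : ℝ => (p / ε ^ 2 + q / ε + r * Real.log ε) * ε ^ 2)
        (𝓝[>] (0:ℝ)) (𝓝 (L * 0)) := h.mul hsq
    have h2 : Tendsto (fun ε : ℝ => p + q * ε + r * (Real.log ε * ε ^ 2))
        (𝓝[>] (0:ℝ)) (𝓝 (L * 0)) := by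
      refine h1.congr' ?_
      filter_upwards [self_mem_nhdsWithin] with x hx
      have hx0 : x ≠ 0 := ne_of_gt hx
      field_simp
    have h3 : Tendsto (fun ε : ℝ => p + q * ε + r * (Real.log ε * ε ^ 2))
        (𝓝[>] (0:ℝ)) (𝓝 (p + q * 0 + r * 0)) :=
      (tendsto_const_nhds.add (hid.const_mul q)).add (hlog2.const_mul r)
    have := tendsto_nhds_unique h2 h3
    linarith [this]
  -- step 2 : q = 0
  have hq : q = 0 := by
    have h1 : Tendsto (fun ε : ℝ => (p / ε ^ 2 + q / ε + r * Real.log ε) * ε)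
        (𝓝[>] (0:ℝ)) (𝓝 (L * 0)) := h.mul hid
    have h2 : Tendsto (fun ε : ℝ => q + r * (Real.log ε * ε))
        (𝓝[>] (0:ℝ)) (𝓝 (L * 0)) := by
      refine h1.congr' ?_
      filter_upwards [self_mem_nhdsWithin] with x hx
      have hx0 : x ≠ 0 := ne_of_gt hx
      rw [hp]
      field_simp
      ring
    have h3 : Tendsto (fun ε : ℝ => q + r * (Real.log ε * ε))
        (𝓝[>] (0:ℝ)) (𝓝 (q + r * 0)) :=
      tendsto_const_nhds.add (hlog1.const_mul r)
    have := tendsto_nhds_unique h2 h3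
    linarith [this]
  -- step 3 : r = 0
  have hr : r = 0 := by
    have hinv : Tendsto (fun ε : ℝ => (Real.log ε)⁻¹) (𝓝[>] (0:ℝ)) (𝓝 0) := by
      have hT : Tendsto (fun ε : ℝ => -Real.log ε) (𝓝[>] (0:ℝ)) atTop :=
        tendsto_neg_atBot_atTop.comp Real.tendsto_log_nhdsGT_zero
      have := hT.inv_tendsto_atTop.neg
      simpa [inv_neg] using this
    have h1 : Tendsto (fun ε : ℝ => (p / ε ^ 2 + q / ε + r * Real.log ε) * (Real.log ε)⁻¹)
        (𝓝[>] (0:ℝ)) (𝓝 (L * 0)) := h.mul hinv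
    have h2 : Tendsto (fun ε : ℝ => r) (𝓝[>] (0:ℝ)) (𝓝 (L * 0)) := by
      refine h1.congr' ?_
      filter_upwards [Ioo_mem_nhdsGT (by norm_num : (0:ℝ) < 1)] with x hx
      have hlx : Real.log x ≠ 0 := ne_of_lt (Real.log_neg hx.1 hx.2)
      rw [hp, hq]
      field_simp
      simp
    have := tendsto_nhds_unique h2 tendsto_const_nhds
    linarith [this]
  have hz : Tendsto (fun _ : ℝ => (0:ℝ)) (𝓝[>] (0:ℝ)) (𝓝 L) := by
    refine h.congr' ?_
    filter_upwards [self_mem_nhdsWithin] with x hx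
    rw [hp, hq, hr]; ring
  have := tendsto_nhds_unique hz (tendsto_const_nhds (α := ℝ) (f := 𝓝[>] (0:ℝ)))
  linarith


noncomputable def Fc (β a τ : ℝ) : ℝ :=
  Real.exp (-τ) / τ ^ 3 * (a * τ / Real.sinh (a * τ) - 1 + β * τ ^ 2 / 6)

lemma F_cont {β a : ℝ} (ha : 0 < a) : ContinuousOn (Fc β a) (Ioi (0:ℝ)) := by
  unfold Fc
  apply ContinuousOn.mul
  · exact (Real.continuous_exp.comp continuous_neg).continuousOn.div
      (continuous_pow 3).continuousOn
      (fun x hx => pow_ne_zero 3 (ne_of_gt hx))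
  · refine ContinuousOn.add (ContinuousOn.sub ?_ continuousOn_const)
      (continuousOn_const.mul ((continuous_pow 2).continuousOn)|>.div_const 6)
    exact (continuous_const.mul continuous_id).continuousOn.div
      (Real.continuous_sinh.comp (continuous_const.mul continuous_id)).continuousOn
      (fun x hx => (Real.sinh_pos_iff.mpr (mul_pos ha hx)).ne')

lemma F_bound_small {β a τ : ℝ} (ha : 0 < a) (hab : a ^ 2 = β)
    (hτ : 0 < τ) (hτ' : a * τ ≤ 1) : |Fc β a τ| ≤ a ^ 4 * τ := by
  have hx0 : 0 < a * τ := mul_pos ha hτ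
  have hb := phi_bound hx0 hτ'
  have hβτ : β * τ ^ 2 = (a * τ) ^ 2 := by rw [← hab]; ring
  unfold Fc
  rw [hβτ, abs_mul]
  have h1 : |Real.exp (-τ) / τ ^ 3| ≤ 1 / τ ^ 3 := by
    rw [abs_div, abs_of_pos (Real.exp_pos _), abs_of_pos (pow_pos hτ 3)]
    gcongr
    exact Real.exp_le_one_iff.mpr (by linarith)
  calc |Real.exp (-τ) / τ ^ 3| * |a * τ / Real.sinh (a * τ) - 1 + (a * τ) ^ 2 / 6|
      ≤ (1 / τ ^ 3) * (a * τ) ^ 4 := by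
        apply mul_le_mul h1 hb (abs_nonneg _) (by positivity)
    _ = a ^ 4 * τ := by field_simp
  
lemma F_bound_large {β a τ : ℝ} (ha : 0 < a) (hab : a ^ 2 = β) (hτ : 0 < τ) :
    |Fc β a τ| ≤ Real.exp (-τ) * (2 / τ ^ 3 + β / (6 * τ)) := by
  have hx0 : 0 < a * τ := mul_pos ha hτ
  have hs : 0 < Real.sinh (a * τ) := Real.sinh_pos_iff.mpr hx0
  have hxs : a * τ ≤ Real.sinh (a * τ) := Real.self_le_sinh_iff.mpr hx0.le
  have hβ : 0 < β := hab ▸ pow_pos ha 2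
  have hq : 0 < a * τ / Real.sinh (a * τ) := div_pos hx0 hs
  have hq1 : a * τ / Real.sinh (a * τ) ≤ 1 := div_le_one_of_le₀ hxs hs.le
  unfold Fc
  rw [abs_mul]
  have h2 : |a * τ / Real.sinh (a * τ) - 1 + β * τ ^ 2 / 6| ≤ 2 + β * τ ^ 2 / 6 := by
    rw [abs_le]; constructor <;> nlinarith
  have h1 : |Real.exp (-τ) / τ ^ 3| = Real.exp (-τ) / τ ^ 3 := by
    rw [abs_of_pos (by positivity)]
  rw [h1]
  calc Real.exp (-τ) / τ ^ 3 * |a * τ / Real.sinh (a * τ) - 1 + β * τ ^ 2 / 6|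
      ≤ Real.exp (-τ) / τ ^ 3 * (2 + β * τ ^ 2 / 6) := by gcongr
    _ = Real.exp (-τ) * (2 / τ ^ 3 + β / (6 * τ)) := by field_simp

lemma F_integrable {β a : ℝ} (ha : 0 < a) (hab : a ^ 2 = β) :
    IntegrableOn (Fc β a) (Ioi (0:ℝ)) := by
  have hβ : 0 < β := hab ▸ pow_pos ha 2
  have hδ : (0:ℝ) < 1 / a := by positivity
  have hu : Ioc (0:ℝ) (1/a) ∪ Ioi (1/a) = Ioi 0 := Ioc_union_Ioi_eq_Ioi hδ.le
  rw [← hu]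
  apply IntegrableOn.union
  · -- small interval
    have hmeas : AEStronglyMeasurable (Fc β a) (volume.restrict (Ioc (0:ℝ) (1/a))) :=
      ((F_cont ha).mono Ioc_subset_Ioi_self).aestronglyMeasurable measurableSet_Ioc
    refine Integrable.mono' (integrable_const (a ^ 3)) hmeas ?_
    rw [ae_restrict_iff' measurableSet_Ioc]
    filter_upwards with τ hτ
    have h1 : a * τ ≤ 1 := by
      rw [← le_div_iff₀' ha]; exact hτ.2
    calc ‖Fc β a τ‖ ≤ a ^ 4 * τ := F_bound_small ha hab hτ.1 h1
      _ ≤ a ^ 4 * (1/a) := by gcongr; exact hτ.2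
      _ = a ^ 3 := by field_simp
  · -- tail
    have hmeas : AEStronglyMeasurable (Fc β a) (volume.restrict (Ioi (1/a))) :=
      ((F_cont ha).mono (Ioi_subset_Ioi hδ.le)).aestronglyMeasurable measurableSet_Ioi
    have hint : IntegrableOn (fun τ : ℝ => (2 / (1/a) ^ 3 + β / (6 * (1/a))) * Real.exp (-τ))
        (Ioi (1/a)) := by
      have := (exp_neg_integrableOn_Ioi (1/a) (by norm_num : (0:ℝ) < 1)).const_mul
        (2 / (1/a) ^ 3 + β / (6 * (1/a)))
      simpa [IntegrableOn] using this
    refine Integrable.mono' hint hmeas ?_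
    rw [ae_restrict_iff' measurableSet_Ioi]
    filter_upwards with τ hτ
    have hτ0 : (0:ℝ) < τ := hδ.trans hτ
    calc ‖Fc β a τ‖ ≤ Real.exp (-τ) * (2 / τ ^ 3 + β / (6 * τ)) :=
          F_bound_large ha hab hτ0
      _ ≤ Real.exp (-τ) * (2 / (1/a) ^ 3 + β / (6 * (1/a))) := by
          have := hτ.out.le
          gcongr
      _ = (2 / (1/a) ^ 3 + β / (6 * (1/a))) * Real.exp (-τ) := by ring


lemma integrableOn_of_bound {f : ℝ → ℝ} {ε C : ℝ} (hc : ContinuousOn f (Ioi ε))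
    (hb : ∀ x ∈ Ioi ε, ‖f x‖ ≤ C * Real.exp (-x)) : IntegrableOn f (Ioi ε) := by
  have hint : IntegrableOn (fun x : ℝ => C * Real.exp (-x)) (Ioi ε) := by
    have := (exp_neg_integrableOn_Ioi ε (by norm_num : (0:ℝ) < 1)).const_mul C
    simpa [IntegrableOn] using this
  exact Integrable.mono' hint (hc.aestronglyMeasurable measurableSet_Ioi)
    ((ae_restrict_iff' measurableSet_Ioi).2 (Eventually.of_forall hb))

lemma tail_tendsto {β a : ℝ} (ha : 0 < a) (hab : a ^ 2 = β) :
    Tendsto (fun ε => ∫ τ in Ioi ε, Fc β a τ) (𝓝[>] (0:ℝ))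
      (𝓝 (∫ τ in Ioi (0:ℝ), Fc β a τ)) := by
  have hδ : (0:ℝ) < 1 / a := by positivity
  have hI := F_integrable ha hab
  have key : ∀ ε ∈ Ioo (0:ℝ) (1/a),
      ∫ τ in Ioi ε, Fc β a τ
        = (∫ τ in Ioi (0:ℝ), Fc β a τ) - ∫ τ in Ioc 0 ε, Fc β a τ := by
    intro ε hε
    have hu : Ioc (0:ℝ) ε ∪ Ioi ε = Ioi 0 := Ioc_union_Ioi_eq_Ioi hε.1.le
    have hsplit : ∫ τ in Ioi (0:ℝ), Fc β a τ
        = (∫ τ in Ioc (0:ℝ) ε, Fc β a τ) + ∫ τ in Ioi ε, Fc β a τ := by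
      rw [← hu] at hI ⊢
      exact (setIntegral_union Ioc_disjoint_Ioi_same measurableSet_Ioi
        (hI.mono_set subset_union_left) (hI.mono_set subset_union_right))
    linarith [hsplit]
  have hz : Tendsto (fun ε => ∫ τ in Ioc (0:ℝ) ε, Fc β a τ) (𝓝[>] (0:ℝ)) (𝓝 0) := by
    apply squeeze_zero_norm'
    · filter_upwards [Ioo_mem_nhdsGT hδ] with ε hε
      have hb : ∀ τ ∈ Ioc (0:ℝ) ε, ‖Fc β a τ‖ ≤ a ^ 4 * ε := by
        intro τ hτ
        have h1 : a * τ ≤ 1 := by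
          rw [← le_div_iff₀' ha]
          exact hτ.2.trans hε.2.le
        calc ‖Fc β a τ‖ ≤ a ^ 4 * τ := F_bound_small ha hab hτ.1 h1
          _ ≤ a ^ 4 * ε := by gcongr; exact hτ.2
      calc ‖∫ τ in Ioc (0:ℝ) ε, Fc β a τ‖
          ≤ a ^ 4 * ε * (volume (Ioc (0:ℝ) ε)).toReal :=
            norm_setIntegral_le_of_norm_le_const
              (by rw [Real.volume_Ioc]; exact ENNReal.ofReal_lt_top) hb
        _ = a ^ 4 * ε * ε := by
            rw [Real.volume_Ioc, sub_zero, ENNReal.toReal_ofReal hε.1.le]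
    · have h1 : Tendsto (fun ε : ℝ => a ^ 4 * ε * ε) (𝓝 (0:ℝ)) (𝓝 (a ^ 4 * 0 * 0)) :=
        (tendsto_id.const_mul (a ^ 4)).mul tendsto_id
      simpa using h1.mono_left nhdsWithin_le_nhds
  have := (tendsto_const_nhds (x := ∫ τ in Ioi (0:ℝ), Fc β a τ)
    (f := 𝓝[>] (0:ℝ))).sub hz
  rw [sub_zero] at this
  refine this.congr' ?_
  filter_upwards [Ioo_mem_nhdsGT hδ] with ε hε
  exact (key ε hε).symm

lemma split_integral {β a ε : ℝ} (ha : 0 < a) (hab : a ^ 2 = β) (hε : 0 < ε) :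
    ∫ x in Ioi ε, Fc β a x
      = a * (∫ x in Ioi ε,
            (fun τ => Real.exp (-τ) * (if τ = 0 then 1/a else τ / Real.sinh (a * τ))) x / x ^ 3)
        - (∫ x in Ioi ε, Real.exp (-x) / x ^ 3)
        + β / 6 * (∫ x in Ioi ε, Real.exp (-x) / x ^ 1) := by
  have hsε : 0 < Real.sinh (a * ε) := Real.sinh_pos_iff.mpr (mul_pos ha hε)
  have hg1 : IntegrableOn (fun x =>
      (Real.exp (-x) * (if x = 0 then 1/a else x / Real.sinh (a * x))) / x ^ 3) (Ioi ε) := by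
    apply integrableOn_of_bound (C := 1 / (ε ^ 2 * Real.sinh (a * ε)))
    · apply ContinuousOn.congr (f := fun x => (Real.exp (-x) * (x / Real.sinh (a * x))) / x ^ 3)
      · apply ContinuousOn.div
        · apply ContinuousOn.mul (Real.continuous_exp.comp continuous_neg).continuousOn
          exact continuous_id.continuousOn.div
            (Real.continuous_sinh.comp (continuous_const.mul continuous_id)).continuousOn
            (fun x hx => (Real.sinh_pos_iff.mpr (mul_pos ha (hε.trans hx))).ne')
        · exact (continuous_pow 3).continuousOn
        · exact fun x hx => pow_ne_zero 3 (hε.trans hx).ne'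
      · intro x hx
        simp only [if_neg (hε.trans hx).ne']
    · intro x hx
      have hx0 : 0 < x := hε.trans hx
      have hsx : 0 < Real.sinh (a * x) := Real.sinh_pos_iff.mpr (mul_pos ha hx0)
      rw [if_neg hx0.ne']
      have heq : Real.exp (-x) * (x / Real.sinh (a * x)) / x ^ 3
          = Real.exp (-x) / (x ^ 2 * Real.sinh (a * x)) := by
        field_simp
      rw [heq, norm_div, Real.norm_eq_abs, abs_of_pos (Real.exp_pos _), Real.norm_eq_abs,
        abs_of_pos (by positivity : (0:ℝ) < x ^ 2 * Real.sinh (a * x))]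
      have hd : ε ^ 2 * Real.sinh (a * ε) ≤ x ^ 2 * Real.sinh (a * x) := by
        have h1 : Real.sinh (a * ε) ≤ Real.sinh (a * x) := by
          apply Real.sinh_le_sinh.mpr
          nlinarith [hx.out]
        apply mul_le_mul (by nlinarith [hx.out]) h1 hsε.le (by positivity)
      calc Real.exp (-x) / (x ^ 2 * Real.sinh (a * x))
          ≤ Real.exp (-x) / (ε ^ 2 * Real.sinh (a * ε)) := by
            gcongr
        _ = 1 / (ε ^ 2 * Real.sinh (a * ε)) * Real.exp (-x) := by ring
  have hg2 : IntegrableOn (fun x => Real.exp (-x) / x ^ 3) (Ioi ε) := by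
    apply integrableOn_of_bound (C := 1 / ε ^ 3)
    · exact (Real.continuous_exp.comp continuous_neg).continuousOn.div
        (continuous_pow 3).continuousOn (fun x hx => pow_ne_zero 3 (hε.trans hx).ne')
    · intro x hx
      have hx0 : 0 < x := hε.trans hx
      rw [norm_div, Real.norm_eq_abs, abs_of_pos (Real.exp_pos _), Real.norm_eq_abs,
        abs_of_pos (pow_pos hx0 3)]
      calc Real.exp (-x) / x ^ 3 ≤ Real.exp (-x) / ε ^ 3 := by
            gcongr
            exact hx.out.le
        _ = 1 / ε ^ 3 * Real.exp (-x) := by ring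
  have hg3 : IntegrableOn (fun x => Real.exp (-x) / x ^ 1) (Ioi ε) := by
    apply integrableOn_of_bound (C := 1 / ε ^ 1)
    · exact (Real.continuous_exp.comp continuous_neg).continuousOn.div
        (continuous_pow 1).continuousOn (fun x hx => pow_ne_zero 1 (hε.trans hx).ne')
    · intro x hx
      have hx0 : 0 < x := hε.trans hx
      rw [norm_div, Real.norm_eq_abs, abs_of_pos (Real.exp_pos _), Real.norm_eq_abs,
        abs_of_pos (pow_pos hx0 1)]
      calc Real.exp (-x) / x ^ 1 ≤ Real.exp (-x) / ε ^ 1 := by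
            gcongr
            exact hx.out.le
        _ = 1 / ε ^ 1 * Real.exp (-x) := by ring
  have heq : ∀ x ∈ Ioi ε, Fc β a x
      = a * ((fun τ => Real.exp (-τ) * (if τ = 0 then 1/a else τ / Real.sinh (a * τ))) x / x ^ 3)
        - Real.exp (-x) / x ^ 3 + β / 6 * (Real.exp (-x) / x ^ 1) := by
    intro x hx
    have hx0 : 0 < x := hε.trans hx
    have hsx : Real.sinh (a * x) ≠ 0 := (Real.sinh_pos_iff.mpr (mul_pos ha hx0)).ne'
    simp only [if_neg hx0.ne']
    unfold Fc
    field_simp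
  rw [setIntegral_congr_fun measurableSet_Ioi heq]
  have hmul1 : IntegrableOn (fun x =>
      a * ((Real.exp (-x) * (if x = 0 then 1/a else x / Real.sinh (a * x))) / x ^ 3))
      (Ioi ε) := hg1.const_mul a
  have hsub : IntegrableOn (fun x =>
      a * ((Real.exp (-x) * (if x = 0 then 1/a else x / Real.sinh (a * x))) / x ^ 3)
        - Real.exp (-x) / x ^ 3) (Ioi ε) := hmul1.sub hg2
  have hmul3 : IntegrableOn (fun x => β / 6 * (Real.exp (-x) / x ^ 1)) (Ioi ε) :=
    hg3.const_mul (β/6)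
  rw [integral_add hsub hmul3, integral_sub hmul1 hg2, MeasureTheory.integral_const_mul, MeasureTheory.integral_const_mul]

/-- `IsFinitePart f m F` : `F` is the Hadamard finite part of the divergent integral
`∫_0^∞ f(x)/x^m dx`, defined canonically as the limit as `ε → 0⁺` of the cutoff
integral `∫_ε^∞ f(x)/x^m dx` minus its diverging part
`D_ε = ∑_{j=0}^{m-2} (f⁽ʲ⁾(0)/j!) ε^{j+1-m}/(m-1-j) - (f⁽ᵐ⁻¹⁾(0)/(m-1)!) log ε`. -/
def IsFinitePart (f : ℝ → ℝ) (m : ℕ) (F : ℝ) : Prop :=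
  Filter.Tendsto (fun ε : ℝ =>
    (∫ x in Set.Ioi ε, f x / x ^ m)
      - (∑ j ∈ Finset.range (m - 1),
          (iteratedDeriv j f 0 / (j.factorial : ℝ)) * ε ^ ((j : ℤ) + 1 - (m : ℤ))
            / ((m : ℝ) - 1 - (j : ℝ)))
      + (iteratedDeriv (m - 1) f 0 / ((m - 1).factorial : ℝ)) * Real.log ε)
    (nhdsWithin 0 (Set.Ioi 0)) (nhds F)

/-- For `β > 0`, the convergent spin-0 Heisenberg–Euler integral
`f₀(β) = ∫_0^∞ τ^{-3} e^{-τ}(√β τ csch(√β τ) − 1 + βτ²/6) dτ` equals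
`√β·FP∫_0^∞ e^{-τ} csch(√β τ)/τ² dτ − FP∫_0^∞ e^{-τ}/τ³ dτ + (β/6)·FP∫_0^∞ e^{-τ}/τ dτ`,
where the first finite part is written `FP∫_0^∞ g(τ)/τ³ dτ` with
`g(τ) = e^{-τ} τ csch(√β τ)` (extended analytically by `g(0) = 1/√β`) so that its
integrand `g(τ)/τ³ = e^{-τ} csch(√β τ)/τ²` has numerator analytic at `0`. -/
theorem heisenbergEuler_spin0_fp (β : ℝ) (hβ : 0 < β) (A B C : ℝ)
    (hA : IsFinitePart
      (fun τ => Real.exp (-τ) *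
        (if τ = 0 then 1 / Real.sqrt β else τ / Real.sinh (Real.sqrt β * τ))) 3 A)
    (hB : IsFinitePart (fun τ => Real.exp (-τ)) 3 B)
    (hC : IsFinitePart (fun τ => Real.exp (-τ)) 1 C) :
    ∫ τ in Set.Ioi (0 : ℝ), Real.exp (-τ) / τ ^ 3 *
        (Real.sqrt β * τ / Real.sinh (Real.sqrt β * τ) - 1 + β * τ ^ 2 / 6) =
      Real.sqrt β * A - B + β / 6 * C := by
  set a := Real.sqrt β with ha_def
  have ha : 0 < a := Real.sqrt_pos.mpr hβ
  have hab : a ^ 2 = β := Real.sq_sqrt hβ.le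
  set gA : ℝ → ℝ := fun τ => Real.exp (-τ) *
      (if τ = 0 then 1 / a else τ / Real.sinh (a * τ)) with hgA_def
  set fB : ℝ → ℝ := fun τ => Real.exp (-τ) with hfB_def
  unfold IsFinitePart at hA hB hC
  show ∫ τ in Set.Ioi (0:ℝ), Fc β a τ = a * A - B + β / 6 * C
  set p : ℝ := iteratedDeriv 0 fB 0 / ((0).factorial : ℝ) / 2
      - a * (iteratedDeriv 0 gA 0 / ((0).factorial : ℝ) / 2) with hp_def
  set q : ℝ := iteratedDeriv 1 fB 0 / ((1).factorial : ℝ) / 1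
      - a * (iteratedDeriv 1 gA 0 / ((1).factorial : ℝ) / 1) with hq_def
  set r : ℝ := a * (iteratedDeriv 2 gA 0 / ((2).factorial : ℝ))
      - iteratedDeriv 2 fB 0 / ((2).factorial : ℝ)
      + β / 6 * (iteratedDeriv 0 fB 0 / ((0).factorial : ℝ)) with hr_def
  have hT := ((hA.const_mul a).sub hB).add (hC.const_mul (β/6))
  have hItail := tail_tendsto ha hab
  have hD := hT.sub hItail
  have hfinal : a * A - B + β / 6 * C - ∫ τ in Set.Ioi (0:ℝ), Fc β a τ = 0 := by
    apply fp_aux (p := p) (q := q) (r := r)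
    refine hD.congr' ?_
    filter_upwards [self_mem_nhdsWithin] with ε hε
    rw [mem_Ioi] at hε
    rw [split_integral ha hab hε]
    simp only [Finset.sum_range_succ, Finset.sum_range_zero, Nat.factorial]
    set d0 := iteratedDeriv 0 gA 0
    set d1 := iteratedDeriv 1 gA 0
    set d2 := iteratedDeriv 2 gA 0
    set e0 := iteratedDeriv 0 fB 0
    set e1 := iteratedDeriv 1 fB 0
    set e2 := iteratedDeriv 2 fB 0
    have hIA : (∫ x in Set.Ioi ε,
        (Real.exp (-x) * if x = 0 then 1 / a else x / Real.sinh (a * x)) / x ^ 3)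
        = ∫ x in Set.Ioi ε, gA x / x ^ 3 := rfl
    rw [hIA]
    have hε0 : ε ≠ 0 := hε.ne'
    have hzm2 : (ε : ℝ) ^ ((0:ℕ) + 1 - (3:ℕ) : ℤ) = 1 / ε ^ 2 := by
      rw [show ((0:ℕ) + 1 - (3:ℕ) : ℤ) = -2 from by norm_num, zpow_neg, one_div]
      norm_num
    have hzm1 : (ε : ℝ) ^ ((1:ℕ) + 1 - (3:ℕ) : ℤ) = 1 / ε := by
      rw [show ((1:ℕ) + 1 - (3:ℕ) : ℤ) = -1 from by norm_num, zpow_neg, one_div, zpow_one]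
    rw [hzm2, hzm1]
    push_cast
    rw [hp_def, hq_def, hr_def]
    push_cast
    field_simp
    ring
  linarith [hfinal]
end

section
/- Let f be analytic on a neighborhood of [0,a] with f(0) ≠ 0 and m a positive integer. Then the Hadamard finite part FP∫_0^a f(x)/x^m dx equals (1/(2πi)) ∫_C f(z) (log z − πi)/z^m dz, where log has branch cut on the positive real axis and C is a closed contour starting and ending at a, going around 0 and straddling the cut, enclosing no singularity of f. -/
open MeasureTheory Set Filter Topology intervalIntegral

lemma hd_exp (k : ℤ) (θ : ℝ) :
    HasDerivAt (fun t : ℝ => Complex.exp ((k:ℂ) * (t:ℂ) * Complex.I))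
      ((k:ℂ) * Complex.I * Complex.exp ((k:ℂ) * (θ:ℂ) * Complex.I)) θ := by
  have h : HasDerivAt (fun z : ℂ => Complex.exp ((k:ℂ) * z * Complex.I))
      ((k:ℂ) * Complex.I * Complex.exp ((k:ℂ) * (θ:ℂ) * Complex.I)) (θ:ℂ) := by
    have h1 : HasDerivAt (fun z : ℂ => (k:ℂ) * z * Complex.I) ((k:ℂ) * Complex.I) (θ:ℂ) := by
      simpa [mul_comm, mul_assoc, mul_left_comm] using
        ((hasDerivAt_id (θ:ℂ)).const_mul ((k:ℂ) * Complex.I))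
    simpa [mul_comm] using (h1.cexp)
  exact h.comp_ofReal

lemma integral_exp_k (k : ℤ) (hk : k ≠ 0) :
    ∫ θ in (0:ℝ)..(2*Real.pi), Complex.exp ((k:ℂ) * (θ:ℂ) * Complex.I) = 0 := by
  have hκ : (k:ℂ) * Complex.I ≠ 0 := by
    simp [Complex.ext_iff, hk]
  have hder : ∀ θ ∈ uIcc (0:ℝ) (2*Real.pi),
      HasDerivAt (fun t : ℝ => Complex.exp ((k:ℂ) * (t:ℂ) * Complex.I) / ((k:ℂ) * Complex.I))
        (Complex.exp ((k:ℂ) * (θ:ℂ) * Complex.I)) θ := by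
    intro θ _
    have h := (hd_exp k θ).div_const ((k:ℂ) * Complex.I)
    rwa [mul_div_cancel_left₀ _ hκ] at h
  have hint : IntervalIntegrable (fun t : ℝ => Complex.exp ((k:ℂ) * (t:ℂ) * Complex.I))
      volume 0 (2*Real.pi) := by
    apply Continuous.intervalIntegrable
    exact Complex.continuous_exp.comp (by continuity)
  have := intervalIntegral.integral_eq_sub_of_hasDerivAt hder hint
  rw [this]
  have h2 : (k:ℂ) * ((2:ℝ)*Real.pi : ℝ) * Complex.I = (k:ℤ) * (2 * (Real.pi:ℂ) * Complex.I) := by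
    push_cast; ring
  rw [h2, Complex.exp_int_mul_two_pi_mul_I]
  simp

lemma integral_theta_exp_k (k : ℤ) (hk : k ≠ 0) :
    ∫ θ in (0:ℝ)..(2*Real.pi), (θ:ℂ) * Complex.exp ((k:ℂ) * (θ:ℂ) * Complex.I)
      = 2 * Real.pi / ((k:ℂ) * Complex.I) := by
  set κ : ℂ := (k:ℂ) * Complex.I with hκdef
  have hκ : κ ≠ 0 := by simp [hκdef, Complex.ext_iff, hk]
  have hder : ∀ θ ∈ uIcc (0:ℝ) (2*Real.pi),
      HasDerivAt (fun t : ℝ => (t:ℂ) * Complex.exp ((k:ℂ) * (t:ℂ) * Complex.I) / κ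
          - Complex.exp ((k:ℂ) * (t:ℂ) * Complex.I) / κ ^ 2)
        ((θ:ℂ) * Complex.exp ((k:ℂ) * (θ:ℂ) * Complex.I)) θ := by
    intro θ _
    have h1 : HasDerivAt (fun t : ℝ => (t:ℂ)) 1 θ := Complex.ofRealCLM.hasDerivAt
    have h2 := hd_exp k θ
    have h3 := ((h1.mul h2).div_const κ).sub (h2.div_const (κ ^ 2))
    refine h3.congr_deriv ?_
    rw [hκdef]
    field_simp
    ring
  have hint : IntervalIntegrable (fun t : ℝ => (t:ℂ) * Complex.exp ((k:ℂ) * (t:ℂ) * Complex.I))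
      volume 0 (2*Real.pi) := by
    apply Continuous.intervalIntegrable
    exact Complex.continuous_ofReal.mul (Complex.continuous_exp.comp (by continuity))
  rw [intervalIntegral.integral_eq_sub_of_hasDerivAt hder hint]
  have h2 : (k:ℂ) * ((2:ℝ)*Real.pi : ℝ) * Complex.I = (k:ℤ) * (2 * (Real.pi:ℂ) * Complex.I) := by
    push_cast; ring
  rw [h2, Complex.exp_int_mul_two_pi_mul_I]
  push_cast
  simp only [mul_zero, zero_mul, Complex.exp_zero]
  field_simp
  ring

lemma key_circle_integral (b : ℝ) (k : ℤ) :
    ∫ θ in (0:ℝ)..(2*Real.pi),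
        ((b:ℂ) + (θ:ℂ) * Complex.I - (Real.pi:ℂ) * Complex.I)
          * Complex.exp ((k:ℂ) * (θ:ℂ) * Complex.I)
      = if k = 0 then 2 * Real.pi * b else 2 * Real.pi / k := by
  have hsplit : ∀ θ : ℝ,
      ((b:ℂ) + (θ:ℂ) * Complex.I - (Real.pi:ℂ) * Complex.I)
          * Complex.exp ((k:ℂ) * (θ:ℂ) * Complex.I)
      = ((b:ℂ) - (Real.pi:ℂ) * Complex.I) * Complex.exp ((k:ℂ) * (θ:ℂ) * Complex.I)
        + Complex.I * ((θ:ℂ) * Complex.exp ((k:ℂ) * (θ:ℂ) * Complex.I)) := fun θ => by ring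
  have hint1 : IntervalIntegrable
      (fun t : ℝ => Complex.exp ((k:ℂ) * (t:ℂ) * Complex.I)) volume 0 (2*Real.pi) :=
    (Complex.continuous_exp.comp (by continuity)).intervalIntegrable _ _
  have hint2 : IntervalIntegrable
      (fun t : ℝ => (t:ℂ) * Complex.exp ((k:ℂ) * (t:ℂ) * Complex.I)) volume 0 (2*Real.pi) :=
    (Complex.continuous_ofReal.mul
      (Complex.continuous_exp.comp (by continuity))).intervalIntegrable _ _
  simp only [hsplit]
  rw [intervalIntegral.integral_add (hint1.const_mul _) (hint2.const_mul _),
    intervalIntegral.integral_const_mul, intervalIntegral.integral_const_mul]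
  rcases eq_or_ne k 0 with hk | hk
  · subst hk
    simp only [Int.cast_zero, zero_mul, Complex.exp_zero, mul_one, if_true]
    have h2 : ∫ θ in (0:ℝ)..(2*Real.pi), ((θ:ℝ) : ℂ) = (((2*Real.pi)^2/2 : ℝ) : ℂ) := by
      rw [show (fun t : ℝ => (t:ℂ)) = (fun t : ℝ => ((t:ℝ):ℂ)) from rfl]
      rw [_root_.intervalIntegral.integral_ofReal (f := fun t : ℝ => t), integral_id]
      norm_num
    rw [intervalIntegral.integral_const, h2]
    simp only [smul_eq_mul, mul_one, Complex.real_smul]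
    push_cast
    ring
  · rw [integral_exp_k k hk, integral_theta_exp_k k hk, if_neg hk]
    have hkC : (k:ℂ) ≠ 0 := Int.cast_ne_zero.mpr hk
    field_simp
    push_cast
    field_simp
    ring

lemma integral_ofReal_zpow (ε r : ℝ) (hε : 0 < ε) (hεr : ε ≤ r) (k : ℤ) (hk : k ≠ -1) :
    ∫ x in ε..r, ((x:ℂ) ^ k) = (((r ^ (k+1) - ε ^ (k+1)) / (k+1) : ℝ) : ℂ) := by
  have h1 : ∀ x ∈ uIcc ε r, (x:ℂ) ^ k = ((x ^ k : ℝ) : ℂ) := by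
    intro x _
    rw [Complex.ofReal_zpow]
  rw [intervalIntegral.integral_congr h1,
    _root_.intervalIntegral.integral_ofReal (f := fun x : ℝ => x ^ k)]
  norm_cast
  rw [integral_zpow (Or.inr ⟨hk, notMem_uIcc_of_lt hε (hε.trans_le hεr)⟩)]
  push_cast
  ring

lemma integral_ofReal_inv (ε r : ℝ) (hε : 0 < ε) (hεr : ε ≤ r) :
    ∫ x in ε..r, ((x:ℂ) ^ (-1 : ℤ)) = ((Real.log r - Real.log ε : ℝ) : ℂ) := by
  have h1 : ∀ x ∈ uIcc ε r, (x:ℂ) ^ (-1:ℤ) = (((x⁻¹ : ℝ)) : ℂ) := by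
    intro x _
    rw [zpow_neg_one, Complex.ofReal_inv]
  rw [intervalIntegral.integral_congr h1,
    _root_.intervalIntegral.integral_ofReal (f := fun x : ℝ => x⁻¹)]
  norm_cast
  rw [integral_inv_of_pos hε (hε.trans_le hεr),
    Real.log_div (hε.trans_le hεr).ne' hε.ne']

lemma line_hasSum (f : ℂ → ℂ) (c : ℕ → ℂ) (m : ℕ) (ε r : ℝ) (hε : 0 < ε) (hεr : ε < r)
    (hcsum : ∀ x : ℝ, ε ≤ x → x ≤ r → HasSum (fun n => c n * (x:ℂ) ^ n) (f x))
    (hsummable : Summable (fun n => ‖c n‖ * r ^ n)) :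
    HasSum (fun n => c n * ∫ x in ε..r, (x:ℂ) ^ ((n:ℤ) - m))
      (∫ x in ε..r, f x / (x:ℂ) ^ m) := by
  have hle : ε ≤ r := hεr.le
  have hrpos : (0:ℝ) < r := hε.trans hεr
  set F : ℕ → ℝ → ℂ := fun n x => c n * (x:ℂ) ^ ((n:ℤ) - m) with hF
  have hxne : ∀ x : ℝ, x ∈ Icc ε r → (x:ℂ) ≠ 0 := by
    intro x hx
    simp only [ne_eq, Complex.ofReal_eq_zero]
    exact (hε.trans_le hx.1).ne'
  have hFcont : ∀ n, ContinuousOn (F n) (Icc ε r) := by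
    intro n
    exact continuousOn_const.mul
      ((Complex.continuous_ofReal.continuousOn).zpow₀ _ (fun x hx => Or.inl (hxne x hx)))
  have hFint : ∀ n, IntegrableOn (F n) (Ioc ε r) := fun n =>
    ((hFcont n).integrableOn_Icc).mono_set Ioc_subset_Icc_self
  have hFbound : ∀ n, ∀ x ∈ Ioc ε r, ‖F n x‖ ≤ ‖c n‖ * r ^ n * (ε ^ m)⁻¹ := by
    intro n x hx
    have hx0 : (0:ℝ) < x := hε.trans hx.1
    rw [hF]
    simp only [norm_mul, norm_zpow, Complex.norm_real, Real.norm_eq_abs, abs_of_pos hx0]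
    rw [zpow_sub₀ hx0.ne', zpow_natCast, zpow_natCast, mul_assoc]
    refine mul_le_mul_of_nonneg_left ?_ (norm_nonneg _)
    rw [div_eq_mul_inv]
    exact mul_le_mul (pow_le_pow_left₀ hx0.le hx.2 n)
      (inv_anti₀ (pow_pos hε m) (pow_le_pow_left₀ hε.le hx.1.le m))
      (inv_nonneg.mpr (pow_pos hx0 m).le) (pow_nonneg hrpos.le n)
  have hFsum : Summable fun n => ∫ x in Ioc ε r, ‖F n x‖ := by
    refine Summable.of_nonneg_of_le (fun n => integral_nonneg fun x => norm_nonneg _)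
      (fun n => ?_) (hsummable.mul_right ((ε ^ m)⁻¹ * (r - ε)))
    have h2 : ∫ x in Ioc ε r, ‖F n x‖ ≤ ∫ _x in Ioc ε r, (‖c n‖ * r ^ n * (ε ^ m)⁻¹) := by
      refine setIntegral_mono_on ((hFint n).norm) ?_ measurableSet_Ioc (hFbound n)
      exact integrableOn_const (by rw [Real.volume_Ioc]; exact ENNReal.ofReal_ne_top)
    refine h2.trans ?_
    rw [setIntegral_const, Real.volume_real_Ioc_of_le (by linarith), smul_eq_mul]
    ring_nf
    exact le_refl _
  have hkey := hasSum_integral_of_summable_integral_norm (μ := volume.restrict (Ioc ε r))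
    hFint hFsum
  have htsum : ∀ x ∈ Ioc ε r, (∑' n, F n x) = f x / (x:ℂ) ^ m := by
    intro x hx
    have hx0 : (0:ℝ) < x := hε.trans hx.1
    have hxC : (x:ℂ) ≠ 0 := by simp [hx0.ne']
    have h3 := (hcsum x hx.1.le hx.2).div_const ((x:ℂ) ^ m)
    have h4 : ∀ n : ℕ, F n x = c n * (x:ℂ) ^ n / (x:ℂ) ^ m := by
      intro n
      show c n * (x:ℂ) ^ ((n:ℤ) - (m:ℤ)) = _
      rw [zpow_sub₀ hxC, zpow_natCast, zpow_natCast, mul_div_assoc]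
    exact (h3.congr_fun h4).tsum_eq
  have heq : ∫ x in Ioc ε r, (∑' n, F n x) = ∫ x in Ioc ε r, f x / (x:ℂ) ^ m :=
    setIntegral_congr_fun (μ := volume) measurableSet_Ioc htsum
  rw [heq, ← intervalIntegral.integral_of_le hle] at hkey
  have hconv : ∀ n, c n * (∫ x in ε..r, (x:ℂ) ^ ((n:ℤ) - m)) = ∫ x in Ioc ε r, F n x := by
    intro n
    rw [← intervalIntegral.integral_of_le hle]
    show _ = ∫ x in ε..r, c n * (x:ℂ) ^ ((n:ℤ) - (m:ℤ))
    rw [intervalIntegral.integral_const_mul]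
  exact hkey.congr_fun hconv

lemma circle_hasSum (f : ℂ → ℂ) (c : ℕ → ℂ) (m : ℕ) (hm : 1 ≤ m) (r : ℝ) (hr : 0 < r)
    (hcsum : ∀ z : ℂ, ‖z‖ = r → HasSum (fun n => c n * z ^ n) (f z))
    (hsummable : Summable (fun n => ‖c n‖ * r ^ n)) :
    HasSum (fun n => c n * (2 * Real.pi * Complex.I) *
        (if n = m - 1 then (Real.log r : ℂ)
         else ((r ^ ((n:ℤ)+1-m) : ℝ) : ℂ) / ((n:ℂ) + 1 - (m:ℂ))))
      (∫ θ in (0:ℝ)..(2*Real.pi),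
          f ((r:ℂ) * Complex.exp ((θ:ℂ) * Complex.I)) *
            ((Real.log r : ℂ) + (θ:ℂ) * Complex.I - (Real.pi:ℂ) * Complex.I) /
              ((r:ℂ) * Complex.exp ((θ:ℂ) * Complex.I)) ^ m *
            (Complex.I * (r:ℂ) * Complex.exp ((θ:ℂ) * Complex.I))) := by
  have hπ : (0:ℝ) < Real.pi := Real.pi_pos
  set z : ℝ → ℂ := fun θ => (r:ℂ) * Complex.exp ((θ:ℂ) * Complex.I) with hzdef
  have hz1 : ∀ θ : ℝ, ‖z θ‖ = r := by
    intro θ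
    simp [hzdef, map_mul, Complex.norm_exp, abs_of_pos hr]
  have hzne : ∀ θ : ℝ, z θ ≠ 0 := by
    intro θ
    intro h
    have := hz1 θ
    rw [h] at this
    simp at this
    exact hr.ne' this.symm
  have hzcont : Continuous z := by
    apply continuous_const.mul
    exact Complex.continuous_exp.comp (by continuity)
  set L : ℝ → ℂ := fun θ => (Real.log r : ℂ) + (θ:ℂ) * Complex.I - (Real.pi:ℂ) * Complex.I
    with hLdef
  have hLcont : Continuous L := by
    apply Continuous.sub
    · exact continuous_const.add (by continuity)
    · exact continuous_const
  set G : ℕ → ℝ → ℂ := fun n θ => c n * (z θ) ^ n * L θ / (z θ) ^ m * (Complex.I * (z θ))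
    with hGdef
  have hGsum : ∀ θ : ℝ, HasSum (fun n => G n θ)
      (f (z θ) * L θ / (z θ) ^ m * (Complex.I * (r:ℂ) * Complex.exp ((θ:ℂ) * Complex.I))) := by
    intro θ
    have h1 := (hcsum (z θ) (hz1 θ)).mul_right (L θ / (z θ) ^ m * (Complex.I * (z θ)))
    have h2 : ∀ n : ℕ, c n * (z θ) ^ n * (L θ / (z θ) ^ m * (Complex.I * (z θ))) = G n θ := by
      intro n; rw [hGdef]; ring
    have h3 : f (z θ) * (L θ / (z θ) ^ m * (Complex.I * (z θ)))
        = f (z θ) * L θ / (z θ) ^ m * (Complex.I * (r:ℂ) * Complex.exp ((θ:ℂ) * Complex.I)) := by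
      rw [hzdef]; ring
    rw [h3] at h1
    exact h1.congr_fun fun n => (h2 n).symm
  have hGcont : ∀ n, Continuous (G n) := by
    intro n
    apply Continuous.mul
    · apply Continuous.div ((continuous_const.mul (hzcont.pow n)).mul hLcont) (hzcont.pow m)
      exact fun θ => pow_ne_zero m (hzne θ)
    · exact continuous_const.mul hzcont
  have hGint : ∀ n, IntegrableOn (G n) (Ioc 0 (2*Real.pi)) := fun n =>
    (hGcont n).integrableOn_Ioc
  set B : ℝ := |Real.log r| + 3 * Real.pi with hBdef
  have hLB : ∀ θ ∈ Ioc (0:ℝ) (2*Real.pi), ‖L θ‖ ≤ B := by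
    intro θ hθ
    rw [hLdef, hBdef]
    calc ‖(Real.log r : ℂ) + (θ:ℂ) * Complex.I - (Real.pi:ℂ) * Complex.I‖
        ≤ ‖(Real.log r : ℂ) + (θ:ℂ) * Complex.I‖ + ‖(Real.pi:ℂ) * Complex.I‖ := norm_sub_le _ _
      _ ≤ ‖(Real.log r : ℂ)‖ + ‖(θ:ℂ) * Complex.I‖ + ‖(Real.pi:ℂ) * Complex.I‖ := by
          exact add_le_add_left (norm_add_le _ _) _
      _ ≤ |Real.log r| + 3 * Real.pi := by
          simp only [norm_mul, Complex.norm_I, mul_one, Complex.norm_real, Real.norm_eq_abs]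
          rw [abs_of_pos hπ, abs_of_pos hθ.1]
          linarith [hθ.2]
  have hGbound : ∀ n, ∀ θ ∈ Ioc (0:ℝ) (2*Real.pi),
      ‖G n θ‖ ≤ ‖c n‖ * r ^ n * (B * r / r ^ m) := by
    intro n θ hθ
    rw [hGdef]
    simp only [norm_mul, norm_div, norm_pow, hz1, Complex.norm_I, one_mul]
    calc ‖c n‖ * r ^ n * ‖L θ‖ / r ^ m * r ≤ ‖c n‖ * r ^ n * B / r ^ m * r := by
          have h5 : ‖L θ‖ ≤ B := hLB θ hθ
          gcongr
      _ = ‖c n‖ * r ^ n * (B * r / r ^ m) := by ring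
  have hGsummable : Summable fun n => ∫ θ in Ioc (0:ℝ) (2*Real.pi), ‖G n θ‖ := by
    refine Summable.of_nonneg_of_le (fun n => integral_nonneg fun θ => norm_nonneg _)
      (fun n => ?_) (hsummable.mul_right ((B * r / r ^ m) * (2 * Real.pi)))
    have h2 : ∫ θ in Ioc (0:ℝ) (2*Real.pi), ‖G n θ‖
        ≤ ∫ _θ in Ioc (0:ℝ) (2*Real.pi), (‖c n‖ * r ^ n * (B * r / r ^ m)) := by
      refine setIntegral_mono_on ((hGint n).norm) ?_ measurableSet_Ioc (hGbound n)
      exact integrableOn_const (by rw [Real.volume_Ioc]; exact ENNReal.ofReal_ne_top)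
    refine h2.trans ?_
    rw [setIntegral_const, Real.volume_real_Ioc_of_le (by linarith), smul_eq_mul]
    ring_nf
    exact le_refl _
  have hkey := hasSum_integral_of_summable_integral_norm
    (μ := volume.restrict (Ioc (0:ℝ) (2*Real.pi))) hGint hGsummable
  have htsum : ∀ θ ∈ Ioc (0:ℝ) (2*Real.pi), (∑' n, G n θ)
      = f ((r:ℂ) * Complex.exp ((θ:ℂ) * Complex.I)) *
          ((Real.log r : ℂ) + (θ:ℂ) * Complex.I - (Real.pi:ℂ) * Complex.I) /
            ((r:ℂ) * Complex.exp ((θ:ℂ) * Complex.I)) ^ m *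
          (Complex.I * (r:ℂ) * Complex.exp ((θ:ℂ) * Complex.I)) := by
    intro θ _
    exact (hGsum θ).tsum_eq
  have heq := setIntegral_congr_fun (μ := volume) measurableSet_Ioc htsum
  rw [heq, ← intervalIntegral.integral_of_le (by positivity)] at hkey
  have hterm : ∀ n : ℕ, ∫ θ in Ioc (0:ℝ) (2*Real.pi), G n θ
      = c n * (2 * Real.pi * Complex.I) *
        (if n = m - 1 then (Real.log r : ℂ)
         else ((r ^ ((n:ℤ)+1-m) : ℝ) : ℂ) / ((n:ℂ) + 1 - (m:ℂ))) := by
    intro n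
    set k : ℤ := (n:ℤ) + 1 - m with hkdef
    have hGeq : ∀ θ : ℝ, G n θ = (c n * Complex.I * ((r ^ k : ℝ) : ℂ)) *
        (((Real.log r : ℂ) + (θ:ℂ) * Complex.I - (Real.pi:ℂ) * Complex.I)
          * Complex.exp ((k:ℂ) * (θ:ℂ) * Complex.I)) := by
      intro θ
      have hzk : z θ ^ k = ((r ^ k : ℝ) : ℂ) * Complex.exp ((k:ℂ) * (θ:ℂ) * Complex.I) := by
        rw [hzdef]
        rw [mul_zpow, ← Complex.ofReal_zpow]
        congr 1
        rw [← Complex.exp_int_mul]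
        congr 1
        push_cast
        ring
      have hzk2 : z θ ^ k = z θ ^ n * z θ / z θ ^ m := by
        rw [hkdef, zpow_sub₀ (hzne θ), zpow_add₀ (hzne θ), zpow_natCast, zpow_one, zpow_natCast]
      have key : c n * z θ ^ n * L θ / z θ ^ m * (Complex.I * z θ)
          = c n * Complex.I * L θ * (z θ ^ k) := by
        rw [hzk2]
        field_simp
      rw [hGdef]
      show c n * (z θ) ^ n * L θ / (z θ) ^ m * (Complex.I * (z θ)) = _
      rw [key, hzk, hLdef]
      ring
    rw [← intervalIntegral.integral_of_le (by positivity)]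
    rw [intervalIntegral.integral_congr (fun θ _ => hGeq θ)]
    rw [intervalIntegral.integral_const_mul, key_circle_integral (Real.log r) k]
    have hcast : ((k:ℤ):ℂ) = (n:ℂ) + 1 - (m:ℂ) := by rw [hkdef]; push_cast; ring
    by_cases hn : n = m - 1
    · have hk0 : k = 0 := by rw [hkdef]; omega
      rw [if_pos hk0, if_pos hn, hk0]
      push_cast
      rw [zpow_zero]
      ring
    · have hk0 : k ≠ 0 := by rw [hkdef]; omega
      rw [if_neg hk0, if_neg hn]
      have hkC : ((k:ℤ):ℂ) ≠ 0 := Int.cast_ne_zero.mpr hk0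
      rw [← hcast]
      field_simp
      push_cast
      field_simp
  exact hkey.congr_fun fun n => ((hterm n).symm)

set_option maxHeartbeats 2000000 in
/-- Contour-integral representation of the Hadamard finite part. -/
theorem finitePart_eq_contour_integral (a : ℝ) (ha : 0 < a) (m : ℕ) (hm : 1 ≤ m)
    (f : ℂ → ℂ) (r : ℝ) (hr : 0 < r) (hra : r < a)
    (hf : ∀ z ∈ Metric.closedBall (0 : ℂ) r ∪
      {z : ℂ | z.im = 0 ∧ 0 ≤ z.re ∧ z.re ≤ a}, AnalyticAt ℂ f z)
    (hf0 : f 0 ≠ 0) :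
    Filter.Tendsto (fun ε : ℝ =>
      (∫ x in ε..a, f x / (x : ℂ) ^ m)
        - (∑ j ∈ Finset.range (m - 1),
            (iteratedDeriv j f 0 / (j.factorial : ℂ)) * (ε : ℂ) ^ ((j : ℤ) + 1 - (m : ℤ))
              / ((m : ℂ) - 1 - (j : ℂ)))
        + (iteratedDeriv (m - 1) f 0 / ((m - 1).factorial : ℂ)) * (Real.log ε : ℂ))
      (nhdsWithin 0 (Set.Ioi 0))
      (nhds ((2 * (Real.pi : ℂ) * Complex.I)⁻¹ *
        (-(∫ x in r..a, f x * ((Real.log x : ℂ) - (Real.pi : ℂ) * Complex.I) / (x : ℂ) ^ m)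
          + (∫ θ in (0 : ℝ)..(2 * Real.pi),
              f ((r : ℂ) * Complex.exp ((θ : ℂ) * Complex.I)) *
                ((Real.log r : ℂ) + (θ : ℂ) * Complex.I - (Real.pi : ℂ) * Complex.I) /
                  ((r : ℂ) * Complex.exp ((θ : ℂ) * Complex.I)) ^ m *
                (Complex.I * (r : ℂ) * Complex.exp ((θ : ℂ) * Complex.I)))
          + (∫ x in r..a, f x * ((Real.log x : ℂ) + (Real.pi : ℂ) * Complex.I) / (x : ℂ) ^ m)))) := by
  ------------------------------------------------------------------
  -- power series setup
  ------------------------------------------------------------------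
  have hπ : (0:ℝ) < Real.pi := Real.pi_pos
  have h2πI : (2 * (Real.pi : ℂ) * Complex.I) ≠ 0 := by
    simp [Complex.ext_iff, Real.pi_ne_zero]
  have hU : IsOpen {z : ℂ | AnalyticAt ℂ f z} := isOpen_analyticAt ℂ f
  obtain ⟨δ, hδ, hδsub⟩ := (isCompact_closedBall (0:ℂ) r).exists_cthickening_subset_open hU
    (fun z hz => hf z (Or.inl hz))
  rw [cthickening_closedBall hδ.le hr.le (0:ℂ)] at hδsub
  set R : NNReal := ⟨δ + r, by positivity⟩ with hRdef
  have hrR : r < (R:ℝ) := by show r < δ + r; linarith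
  have hRpos : 0 < R := by
    rw [← NNReal.coe_lt_coe]; exact hr.trans hrR
  have hd : DifferentiableOn ℂ f (Metric.closedBall (0:ℂ) R) := fun z hz =>
    ((hδsub hz).differentiableAt).differentiableWithinAt
  have hp := hd.hasFPowerSeriesOnBall hRpos
  set p := cauchyPowerSeries f 0 R with hpdef
  set c : ℕ → ℂ := fun n => p.coeff n with hcdef
  have hcsum : ∀ z : ℂ, ‖z‖ < (R:ℝ) → HasSum (fun n => c n * z ^ n) (f z) := by
    intro z hz
    have hmem : z ∈ EMetric.ball (0:ℂ) R := by
      show z ∈ Metric.eball (0:ℂ) R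
      rw [Metric.eball_coe]
      simpa [Metric.mem_ball, dist_zero_right] using hz
    have := hp.hasSum hmem
    simp only [FormalMultilinearSeries.apply_eq_pow_smul_coeff, smul_eq_mul, zero_add] at this
    exact this.congr_fun fun n => mul_comm _ _
  have hsummable : Summable (fun n => ‖c n‖ * r ^ n) := by
    have h1 : (r.toNNReal : ENNReal) < p.radius := by
      refine lt_of_lt_of_le ?_ hp.r_le
      rw [ENNReal.coe_lt_coe, ← NNReal.coe_lt_coe, Real.coe_toNNReal _ hr.le]
      exact hrR
    have h2 := p.summable_norm_mul_pow h1
    refine Summable.of_nonneg_of_le (fun n => by positivity) (fun n => ?_) h2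
    rw [Real.coe_toNNReal _ hr.le]
    have hb : ‖c n‖ ≤ ‖p n‖ := by
      have h3 := (p n).le_opNorm (fun _ => (1:ℂ))
      have h4 : (∏ _i : Fin n, ‖(1:ℂ)‖) = 1 := by simp
      rw [h4, mul_one] at h3
      exact h3
    exact mul_le_mul_of_nonneg_right hb (by positivity)
  have hcoeff : ∀ j, iteratedDeriv j f 0 = (j.factorial : ℂ) * c j := by
    intro j
    have := hp.factorial_smul (1:ℂ) j
    rw [FormalMultilinearSeries.apply_eq_pow_smul_coeff] at this
    simp only [one_pow, one_smul, nsmul_eq_mul] at this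
    rw [iteratedDeriv_eq_iteratedFDeriv, ← this]
  have hcoeff' : ∀ j, iteratedDeriv j f 0 / (j.factorial : ℂ) = c j := by
    intro j
    rw [hcoeff j, mul_comm, mul_div_assoc, div_self, mul_one]
    exact_mod_cast j.factorial_ne_zero
  ------------------------------------------------------------------
  -- continuity / integrability of the various integrands
  ------------------------------------------------------------------
  have hfR : ∀ x : ℝ, 0 ≤ x → x ≤ a → ContinuousAt (fun t : ℝ => f t) x := by
    intro x h0 h1
    have hx : AnalyticAt ℂ f (x:ℂ) := hf _ (Or.inr (by simp [h0, h1]))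
    exact hx.continuousAt.comp Complex.continuous_ofReal.continuousAt
  have hg0 : ∀ s t : ℝ, 0 < s → s ≤ t → t ≤ a →
      IntervalIntegrable (fun x : ℝ => f x / (x:ℂ) ^ m) volume s t := by
    intro s t hs hst hta
    apply ContinuousOn.intervalIntegrable
    rw [uIcc_of_le hst]
    intro x hx
    have hx0 : (0:ℝ) < x := hs.trans_le hx.1
    have hxC : ((x:ℝ):ℂ) ^ m ≠ 0 := pow_ne_zero _ (by simp [hx0.ne'])
    exact ContinuousWithinAt.div
      ((hfR x hx0.le (hx.2.trans hta)).continuousWithinAt)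
      (((Complex.continuous_ofReal.pow m).continuousAt).continuousWithinAt) hxC
  have hgpm : ∀ w : ℂ, IntervalIntegrable
      (fun x : ℝ => f x * ((Real.log x : ℂ) + w) / (x:ℂ) ^ m) volume r a := by
    intro w
    apply ContinuousOn.intervalIntegrable
    rw [uIcc_of_le hra.le]
    intro x hx
    have hx0 : (0:ℝ) < x := hr.trans_le hx.1
    have hxC : ((x:ℝ):ℂ) ^ m ≠ 0 := pow_ne_zero _ (by simp [hx0.ne'])
    refine ContinuousWithinAt.div (ContinuousWithinAt.mul
      ((hfR x hx0.le hx.2).continuousWithinAt) ?_)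
      (((Complex.continuous_ofReal.pow m).continuousAt).continuousWithinAt) hxC
    apply ContinuousWithinAt.add
    · exact (Complex.continuous_ofReal.continuousAt.comp
        (Real.continuousAt_log hx0.ne')).continuousWithinAt
    · exact continuousWithinAt_const
  have htopI : IntervalIntegrable
      (fun x : ℝ => f x * ((Real.log x : ℂ) - (Real.pi:ℂ) * Complex.I) / (x:ℂ) ^ m)
      volume r a := by
    have h := hgpm (-((Real.pi:ℂ) * Complex.I))
    refine h.congr ?_
    intro x _
    dsimp only
    ring
  have hbotI : IntervalIntegrable
      (fun x : ℝ => f x * ((Real.log x : ℂ) + (Real.pi:ℂ) * Complex.I) / (x:ℂ) ^ m)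
      volume r a := hgpm ((Real.pi:ℂ) * Complex.I)
  ------------------------------------------------------------------
  -- the target value
  ------------------------------------------------------------------
  set Circ : ℂ := ∫ θ in (0:ℝ)..(2*Real.pi),
      f ((r:ℂ) * Complex.exp ((θ:ℂ) * Complex.I)) *
        ((Real.log r : ℂ) + (θ:ℂ) * Complex.I - (Real.pi:ℂ) * Complex.I) /
          ((r:ℂ) * Complex.exp ((θ:ℂ) * Complex.I)) ^ m *
        (Complex.I * (r:ℂ) * Complex.exp ((θ:ℂ) * Complex.I)) with hCircdef
  set Ira : ℂ := ∫ x in r..a, f x / (x:ℂ) ^ m with hIradef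
  set N : ℂ := Ira + (2 * (Real.pi:ℂ) * Complex.I)⁻¹ * Circ with hNdef
  have hNval : (2 * (Real.pi : ℂ) * Complex.I)⁻¹ *
      (-(∫ x in r..a, f x * ((Real.log x : ℂ) - (Real.pi : ℂ) * Complex.I) / (x : ℂ) ^ m)
        + Circ
        + (∫ x in r..a, f x * ((Real.log x : ℂ) + (Real.pi : ℂ) * Complex.I) / (x : ℂ) ^ m))
      = N := by
    have hsubeq : (∫ x in r..a, f x * ((Real.log x : ℂ) + (Real.pi : ℂ) * Complex.I) / (x : ℂ) ^ m)
        - (∫ x in r..a, f x * ((Real.log x : ℂ) - (Real.pi : ℂ) * Complex.I) / (x : ℂ) ^ m)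
        = (2 * (Real.pi:ℂ) * Complex.I) * Ira := by
      rw [← intervalIntegral.integral_sub hbotI htopI]
      rw [hIradef, ← intervalIntegral.integral_const_mul]
      apply intervalIntegral.integral_congr
      intro x _
      ring
    have hrearr : -(∫ x in r..a, f x * ((Real.log x : ℂ) - (Real.pi : ℂ) * Complex.I) / (x : ℂ) ^ m)
        + Circ
        + (∫ x in r..a, f x * ((Real.log x : ℂ) + (Real.pi : ℂ) * Complex.I) / (x : ℂ) ^ m)
        = Circ + (2 * (Real.pi:ℂ) * Complex.I) * Ira := by
      rw [← hsubeq]; ring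
    rw [hrearr, hNdef]
    field_simp
    ring
  ------------------------------------------------------------------
  -- the circle expansion
  ------------------------------------------------------------------
  set W : ℕ → ℂ := fun n =>
      if n = m - 1 then (Real.log r : ℂ)
      else ((r ^ ((n:ℤ)+1-m) : ℝ) : ℂ) / ((n:ℂ) + 1 - (m:ℂ)) with hWdef
  have hcircle : HasSum (fun n => c n * W n)
      ((2 * (Real.pi:ℂ) * Complex.I)⁻¹ * Circ) := by
    have h0 := (circle_hasSum f c m hm r hr
      (fun z hz => hcsum z (by rw [hz]; exact hrR)) hsummable).mul_left
      ((2 * (Real.pi:ℂ) * Complex.I)⁻¹)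
    rw [← hCircdef] at h0
    refine h0.congr_fun fun n => ?_
    rw [hWdef]
    field_simp
  ------------------------------------------------------------------
  -- the tail function E and its limit
  ------------------------------------------------------------------
  set E : ℝ → ℂ := fun t => ∑' i, c (i + m) * ((t ^ (i+1) : ℝ) : ℂ) / ((i:ℂ) + 1) with hEdef
  have hshift : Summable (fun i => ‖c (i + m)‖ * r ^ i) := by
    have h1 : Summable (fun i => ‖c (i + m)‖ * r ^ (i + m)) :=
      (summable_nat_add_iff m).mpr hsummable
    have h2 := h1.div_const (r ^ m)
    refine h2.congr fun i => ?_
    rw [pow_add]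
    field_simp
  have hE0 : Filter.Tendsto E (nhdsWithin 0 (Set.Ioi 0)) (nhds 0) := by
    set CE : ℝ := ∑' i, ‖c (i + m)‖ * r ^ i with hCEdef
    apply squeeze_zero_norm' (a := fun t => CE * t)
    · filter_upwards [Ioo_mem_nhdsGT_of_mem (show (0:ℝ) ∈ Ico (0:ℝ) r from ⟨le_refl _, hr⟩)]
        with t ht
      have hHS : HasSum (fun i => (‖c (i + m)‖ * r ^ i) * t) (CE * t) :=
        hshift.hasSum.mul_right t
      refine tsum_of_norm_bounded hHS fun i => ?_
      have hnrm : ‖((i:ℂ) + 1)‖ = ((i:ℕ) + 1 : ℝ) := by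
        have : ((i:ℂ) + 1) = (((i+1 : ℕ)):ℂ) := by push_cast; ring
        rw [this, Complex.norm_natCast]
        push_cast; ring
      rw [norm_div, norm_mul, hnrm, Complex.norm_real, Real.norm_eq_abs,
        abs_of_pos (pow_pos ht.1 _)]
      calc ‖c (i + m)‖ * t ^ (i+1) / ((i:ℕ) + 1 : ℝ)
          ≤ ‖c (i + m)‖ * t ^ (i+1) := by
            apply div_le_self (mul_nonneg (norm_nonneg _) (pow_nonneg ht.1.le _))
            exact_mod_cast Nat.one_le_iff_ne_zero.mpr (Nat.succ_ne_zero i)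
        _ = ‖c (i + m)‖ * (t ^ i * t) := by rw [pow_succ]
        _ ≤ ‖c (i + m)‖ * (r ^ i * t) := by
            have : t ^ i ≤ r ^ i := pow_le_pow_left₀ ht.1.le ht.2.le i
            have := mul_le_mul_of_nonneg_right this ht.1.le
            exact mul_le_mul_of_nonneg_left this (norm_nonneg _)
        _ = (‖c (i + m)‖ * r ^ i) * t := by ring
    · have : Filter.Tendsto (fun t : ℝ => CE * t) (nhds 0) (nhds 0) := by
        exact (continuous_const.mul continuous_id).tendsto' (0:ℝ) 0 (by simp)
      exact this.mono_left nhdsWithin_le_nhds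
  ------------------------------------------------------------------
  -- the pointwise identity on (0, r)
  ------------------------------------------------------------------
  have hmain : ∀ ε : ℝ, ε ∈ Ioo (0:ℝ) r →
      ((∫ x in ε..a, f x / (x : ℂ) ^ m)
        - (∑ j ∈ Finset.range (m - 1),
            (iteratedDeriv j f 0 / (j.factorial : ℂ)) * (ε : ℂ) ^ ((j : ℤ) + 1 - (m : ℤ))
              / ((m : ℂ) - 1 - (j : ℂ)))
        + (iteratedDeriv (m - 1) f 0 / ((m - 1).factorial : ℂ)) * (Real.log ε : ℂ))
      = N - E ε := by
    intro ε hε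
    have hε0 : (0:ℝ) < ε := hε.1
    have hεr : ε < r := hε.2
    have hline := line_hasSum f c m ε r hε0 hεr
      (fun x h1 h2 => hcsum x (by
        rw [Complex.norm_real, Real.norm_eq_abs, abs_of_pos (hε0.trans_le h1)]
        exact lt_of_le_of_lt h2 hrR)) hsummable
    have hD := hline.sub hcircle
    -- evaluate the finite part of the sum
    have hA : ∀ j ∈ Finset.range (m - 1),
        (c j * ∫ x in ε..r, (x:ℂ) ^ ((j:ℤ) - m)) - c j * W j
          = (iteratedDeriv j f 0 / (j.factorial : ℂ)) * (ε : ℂ) ^ ((j : ℤ) + 1 - (m : ℤ))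
              / ((m : ℂ) - 1 - (j : ℂ)) := by
      intro j hj
      rw [Finset.mem_range] at hj
      have hjm : j ≠ m - 1 := by omega
      have hkne : (j:ℤ) - m ≠ -1 := by omega
      have hKne : ((j:ℂ) + 1 - (m:ℂ)) ≠ 0 := by
        intro h
        have h2 : (((j:ℤ) + 1 - (m:ℤ) : ℤ) : ℂ) = 0 := by push_cast; linear_combination h
        have h3 : ((j:ℤ) + 1 - (m:ℤ) : ℤ) = 0 := by exact_mod_cast h2
        omega
      have hMne : ((m:ℂ) - 1 - (j:ℂ)) ≠ 0 := by
        intro h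
        have h2 : (((m:ℤ) - 1 - (j:ℤ) : ℤ) : ℂ) = 0 := by push_cast; linear_combination h
        have h3 : ((m:ℤ) - 1 - (j:ℤ) : ℤ) = 0 := by exact_mod_cast h2
        omega
      rw [integral_ofReal_zpow ε r hε0 hεr.le ((j:ℤ) - m) hkne, hcoeff' j, hWdef]
      simp only [if_neg hjm]
      have hexp : (j:ℤ) - m + 1 = (j:ℤ) + 1 - m := by ring
      rw [hexp]
      have e1 : (((r ^ ((j:ℤ)+1-m) - ε ^ ((j:ℤ)+1-m)) / ((((j:ℤ) - m : ℤ) : ℝ) + 1) : ℝ) : ℂ)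
          = ((r:ℂ) ^ ((j:ℤ)+1-m) - (ε:ℂ) ^ ((j:ℤ)+1-m)) / ((j:ℂ) + 1 - (m:ℂ)) := by
        rw [Complex.ofReal_div, Complex.ofReal_sub, Complex.ofReal_zpow, Complex.ofReal_zpow]
        congr 1
        push_cast
        ring
      rw [e1, Complex.ofReal_zpow]
      have hM : (m:ℂ) - 1 - (j:ℂ) = -((j:ℂ) + 1 - (m:ℂ)) := by ring
      rw [hM, div_neg]
      field_simp [hKne]
      ring
    -- the (m-1)-st term
    have hB : (c (m-1) * ∫ x in ε..r, (x:ℂ) ^ (((m-1:ℕ):ℤ) - m)) - c (m-1) * W (m-1)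
        = -((iteratedDeriv (m - 1) f 0 / ((m - 1).factorial : ℂ)) * (Real.log ε : ℂ)) := by
      have hexp : ((m-1:ℕ):ℤ) - m = -1 := by omega
      rw [hexp, integral_ofReal_inv ε r hε0 hεr.le, hcoeff' (m-1), hWdef]
      simp only [if_pos rfl]
      push_cast
      ring
    -- the tail terms
    have hC : ∀ i : ℕ,
        (c (i + m) * ∫ x in ε..r, (x:ℂ) ^ (((i + m:ℕ):ℤ) - m)) - c (i + m) * W (i + m)
          = -(c (i + m) * ((ε ^ (i+1) : ℝ) : ℂ) / ((i:ℂ) + 1)) := by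
      intro i
      have hne : i + m ≠ m - 1 := by omega
      have hkne : ((i + m:ℕ):ℤ) - m ≠ -1 := by omega
      have hKne : ((i:ℂ) + 1) ≠ 0 := Nat.cast_add_one_ne_zero i
      rw [integral_ofReal_zpow ε r hε0 hεr.le (((i + m:ℕ):ℤ) - m) hkne, hWdef]
      simp only [if_neg hne]
      have hexp : ((i + m:ℕ):ℤ) - m + 1 = ((i+1:ℕ):ℤ) := by push_cast; ring
      have hexp2 : ((i + m:ℕ):ℤ) + 1 - m = ((i+1:ℕ):ℤ) := by push_cast; ring
      rw [hexp, hexp2]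
      simp only [zpow_natCast]
      have hden : (((i + m:ℕ)):ℂ) + 1 - (m:ℂ) = (i:ℂ) + 1 := by push_cast; ring
      have hd1 : (((((i + m:ℕ)):ℤ) - (m:ℤ) : ℤ):ℝ) + 1 = ((i:ℝ) + 1) := by push_cast; ring
      rw [hden, hd1]
      push_cast
      field_simp [hKne]
      ring
    -- assemble the tsum
    have hkeyEq : (∫ x in ε..r, f x / (x:ℂ) ^ m)
        - (2 * (Real.pi:ℂ) * Complex.I)⁻¹ * Circ
        = (∑ j ∈ Finset.range (m - 1),
            (iteratedDeriv j f 0 / (j.factorial : ℂ)) * (ε : ℂ) ^ ((j : ℤ) + 1 - (m : ℤ))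
              / ((m : ℂ) - 1 - (j : ℂ)))
          - (iteratedDeriv (m - 1) f 0 / ((m - 1).factorial : ℂ)) * (Real.log ε : ℂ)
          - E ε := by
      rw [← hD.tsum_eq, ← hD.summable.sum_add_tsum_nat_add m]
      have hfin : ∑ n ∈ Finset.range m,
          ((c n * ∫ x in ε..r, (x:ℂ) ^ ((n:ℤ) - m)) - c n * W n)
          = (∑ j ∈ Finset.range (m - 1),
              (iteratedDeriv j f 0 / (j.factorial : ℂ)) * (ε : ℂ) ^ ((j : ℤ) + 1 - (m : ℤ))
                / ((m : ℂ) - 1 - (j : ℂ)))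
            - (iteratedDeriv (m - 1) f 0 / ((m - 1).factorial : ℂ)) * (Real.log ε : ℂ) := by
        rw [show m = (m-1)+1 by omega, Finset.sum_range_succ]
        rw [show (m-1)+1 = m by omega]
        rw [Finset.sum_congr rfl hA, hB]
        ring
      have htail : ∑' i, ((c (i + m) * ∫ x in ε..r, (x:ℂ) ^ (((i + m:ℕ):ℤ) - m))
            - c (i + m) * W (i + m)) = - E ε := by
        rw [tsum_congr hC, tsum_neg, hEdef]
      rw [hfin, htail]
      ring
    -- conclude
    have hsplit : (∫ x in ε..a, f x / (x : ℂ) ^ m)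
        = (∫ x in ε..r, f x / (x:ℂ) ^ m) + Ira := by
      rw [hIradef]
      exact (intervalIntegral.integral_add_adjacent_intervals
        (hg0 ε r hε0 hεr.le hra.le) (hg0 r a hr hra.le (le_refl a))).symm
    rw [hsplit, hNdef]
    linear_combination hkeyEq
  ------------------------------------------------------------------
  -- finish
  ------------------------------------------------------------------
  rw [hNval]
  have htend : Filter.Tendsto (fun ε : ℝ => N - E ε) (nhdsWithin 0 (Set.Ioi 0)) (nhds N) := by
    simpa using tendsto_const_nhds.sub hE0
  refine Filter.Tendsto.congr' ?_ htend
  filter_upwards [Ioo_mem_nhdsGT_of_mem (show (0:ℝ) ∈ Ico (0:ℝ) r from ⟨le_refl _, hr⟩)]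
    with ε hε
  exact (hmain ε hε).symm
end
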